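/- arXiv:2405.04631 — 8 statements merged into one kernel-verified Lean document; each statement's English description precedes it below -/
import Mathlib

section
/- Let 0 ≤ a_1 < a_2 < ⋯ < a_N < b ≤ d. There are exactly N distinct semistandard pairs in I(d,N) × {0,1,…,d} with content {a_1,…,a_N,b}, namely the iterates P^α((a_1,…,a_N), b) for α ∈ {0,1,…,N−1}; moreover the second components of these pairs, in this order, form the strictly decreasing chain b > a_N > a_{N−1} > ⋯ > a_2. -/
/-! Put `(s₀, …, s_N) = (a₁, …, a_N, b)`, a strictly increasing tuple. A pair with content
`{s₀, …, s_N}` and strictly increasing first component is determined by its second component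
`s_k`: it is `s` with `s_k` removed, paired with `s_k`; it is semistandard exactly when `k ≠ 0`.
The neighbour map sends the pair for `s_{k+1}` to the pair for `s_k`, since `s_k` is the largest
entry of the first component not exceeding `s_{k+1}`, and exchanging the two keeps the first
component sorted. Starting at `k = N`, the iterates therefore run through `k = N, N - 1, …, 1`. -/

noncomputable section

/-- A pair `(i, j)` with `i ∈ I(d,N)` and `j ∈ {0,…,d}` is *semistandard* if `i` is strictly
increasing and `i₁ ≤ j`. -/
def IsSS (d : ℕ) {N : ℕ} (p : (Fin N → ℕ) × ℕ) : Prop :=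
  StrictMono p.1 ∧ (∀ a, p.1 a ≤ d) ∧ p.2 ≤ d ∧
    ∀ a : Fin N, (a : ℕ) = 0 → p.1 a ≤ p.2

/-- The *neighbour* map `P`: swap `j` with `i_α` where `α` is maximal with `i_α ≤ j`
(junk value: the identity, if no such `α` exists). -/
def Pmap {N : ℕ} (p : (Fin N → ℕ) × ℕ) : (Fin N → ℕ) × ℕ :=
  if h : (Finset.univ.filter fun a : Fin N => p.1 a ≤ p.2).Nonempty then
    let α := (Finset.univ.filter fun a : Fin N => p.1 a ≤ p.2).max' h
    (Function.update p.1 α p.2, p.1 α)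
  else p

/-- The *content* of a pair `(i,j)`: the multiset `{i₁,…,i_N} ∪ {j}`. -/
def ssContent {N : ℕ} (p : (Fin N → ℕ) × ℕ) : Multiset ℕ :=
  p.2 ::ₘ Finset.univ.val.map p.1

theorem StrictMono.eq_of_map_univ_eq {α : Type*} [Preorder α] {n : ℕ} {f g : Fin n → α}
    (hf : StrictMono f) (hg : StrictMono g)
    (h : Finset.univ.val.map f = Finset.univ.val.map g) : f = g := by
  refine (hf.range_inj hg).1 (Set.ext fun x => ?_)
  simpa using congrArg (x ∈ ·) h

theorem strictMono_snoc {α : Type*} [Preorder α] {n : ℕ} {a : Fin n → α} {b : α}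
    (ha : StrictMono a) (hab : ∀ i, a i < b) : StrictMono (Fin.snoc a b : Fin (n + 1) → α) := by
  rw [← Fin.insertNth_last', Fin.strictMono_insertNth_iff]
  exact ⟨ha, fun i _ => hab i, fun i hi => absurd hi (by simp)⟩

theorem Pmap_eq_of_isGreatest {N : ℕ} {p : (Fin N → ℕ) × ℕ} {i : Fin N}
    (hi : IsGreatest {k | p.1 k ≤ p.2} i) :
    Pmap p = (Function.update p.1 i p.2, p.1 i) := by
  have hne : (Finset.univ.filter fun k : Fin N => p.1 k ≤ p.2).Nonempty :=
    ⟨i, by simpa using hi.1⟩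
  have hmax : (Finset.univ.filter fun k : Fin N => p.1 k ≤ p.2).max' hne = i :=
    le_antisymm (Finset.max'_le _ _ _ fun k hk => hi.2 (by simpa using hk))
      (Finset.le_max' _ _ (by simpa using hi.1))
  rw [Pmap, dif_pos hne]
  simp only [hmax]

section removeNthPair

variable {n : ℕ} {s : Fin (n + 1) → ℕ}

def removeNthPair (s : Fin (n + 1) → ℕ) (k : Fin (n + 1)) : (Fin n → ℕ) × ℕ :=
  (Fin.removeNth k s, s k)

theorem ssContent_removeNthPair (s : Fin (n + 1) → ℕ) (k : Fin (n + 1)) :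
    ssContent (removeNthPair s k) = Finset.univ.val.map s := by
  rw [Fin.univ_succAbove n k, Finset.cons_val, Multiset.map_cons, Finset.map_val,
    Multiset.map_map]
  rfl

theorem isSS_removeNthPair_iff {d : ℕ} (hn : 0 < n) (hs : StrictMono s) (hd : ∀ i, s i ≤ d)
    (k : Fin (n + 1)) : IsSS d (removeNthPair s k) ↔ k ≠ 0 := by
  constructor
  · rintro ⟨-, -, -, hfirst⟩ rfl
    have h := hfirst ⟨0, hn⟩ rfl
    simp only [removeNthPair, Fin.removeNth, Fin.zero_succAbove, hs.le_iff_le] at h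
    exact absurd h (by simp)
  · intro hk
    refine ⟨hs.removeNth k, fun i => hd _, hd k, fun i hi => hs.monotone ?_⟩
    have hik : i.castSucc < k := by
      rw [show i.castSucc = 0 from Fin.ext hi]
      exact Fin.pos_iff_ne_zero.2 hk
    rw [Fin.succAbove_of_castSucc_lt _ _ hik]
    exact hik.le

theorem Pmap_removeNthPair_succ (hs : StrictMono s) (k : Fin n) :
    Pmap (removeNthPair s k.succ) = removeNthPair s k.castSucc := by
  have hk : IsGreatest {j | (removeNthPair s k.succ).1 j ≤ (removeNthPair s k.succ).2} k := by
    refine ⟨hs.monotone ?_, fun j hj => ?_⟩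
    · simpa using Fin.castSucc_le_succ k
    · by_contra! hkj
      simp only [Set.mem_ofPred_eq, removeNthPair, Fin.removeNth,
        Fin.succAbove_succ_of_lt _ _ hkj, hs.le_iff_le, Fin.succ_le_succ_iff] at hj
      exact hkj.not_ge hj
  rw [Pmap_eq_of_isGreatest hk]
  refine Prod.ext (funext fun j => ?_) (by simp [removeNthPair, Fin.removeNth_apply])
  rcases lt_trichotomy j k with hjk | rfl | hkj
  · simp [removeNthPair, Fin.removeNth, hjk.ne, Fin.succAbove_succ_of_le _ _ hjk.le,
      Fin.succAbove_castSucc_of_lt _ _ hjk]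
  · simp [removeNthPair, Fin.removeNth_apply]
  · simp [removeNthPair, Fin.removeNth, hkj.ne', Fin.succAbove_succ_of_lt _ _ hkj,
      Fin.succAbove_castSucc_of_le _ _ hkj.le]

theorem Pmap_iterate_removeNthPair_last (hs : StrictMono s) {α : ℕ} (hα : α ≤ n) :
    Pmap^[α] (removeNthPair s (Fin.last n)) = removeNthPair s ⟨n - α, by omega⟩ := by
  induction α with
  | zero => rfl
  | succ α ih =>
    have hsucc : (⟨n - α, by omega⟩ : Fin (n + 1)) = (⟨n - α - 1, by omega⟩ : Fin n).succ :=
      Fin.ext (by simp; omega)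
    have hcast :
        (⟨n - (α + 1), by omega⟩ : Fin (n + 1)) = (⟨n - α - 1, by omega⟩ : Fin n).castSucc :=
      Fin.ext (by simp; omega)
    rw [Function.iterate_succ_apply', ih (by omega), hsucc, Pmap_removeNthPair_succ hs, hcast]

theorem isSS_and_ssContent_iff {d : ℕ} (hn : 0 < n) (hs : StrictMono s) (hd : ∀ i, s i ≤ d)
    (p : (Fin n → ℕ) × ℕ) :
    (IsSS d p ∧ ssContent p = Finset.univ.val.map s) ↔ ∃ k ≠ 0, p = removeNthPair s k := by
  constructor
  · rintro ⟨hp, hc⟩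
    have hp2 : p.2 ∈ Finset.univ.val.map s := by
      rw [← hc]
      exact Multiset.mem_cons_self _ _
    obtain ⟨k, -, hk⟩ := Multiset.mem_map.1 hp2
    have hmap : Finset.univ.val.map p.1 = Finset.univ.val.map (Fin.removeNth k s) := by
      rw [← ssContent_removeNthPair s k, ssContent, ssContent, removeNthPair, hk] at hc
      exact (Multiset.cons_inj_right _).1 hc
    have hpk : p = removeNthPair s k :=
      Prod.ext (hp.1.eq_of_map_univ_eq (hs.removeNth k) hmap) hk.symm
    exact ⟨k, (isSS_removeNthPair_iff hn hs hd k).1 (hpk ▸ hp), hpk⟩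
  · rintro ⟨k, hk, rfl⟩
    exact ⟨(isSS_removeNthPair_iff hn hs hd k).2 hk, ssContent_removeNthPair s k⟩

end removeNthPair

/-- Lemma 2.3 of the paper. Let `0 ≤ a₁ < ⋯ < a_N < b ≤ d`. The `N` distinct
semistandard pairs with content `{a₁,…,a_N,b}` are the iterates `P^α((a₁,…,a_N), b)` for
`0 ≤ α ≤ N-1`, and their second components form the decreasing chain `b > a_N > ⋯ > a₂`. -/
theorem statement1 (N d : ℕ) (hN : 0 < N) (a : Fin N → ℕ) (b : ℕ)
    (ha : StrictMono a) (hab : a ⟨N - 1, by omega⟩ < b) (hb : b ≤ d) :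
    (∀ p : (Fin N → ℕ) × ℕ,
        (IsSS d p ∧ ssContent p = ssContent (a, b)) ↔ ∃ α < N, p = Pmap^[α] (a, b)) ∧
    (∀ α < N, ∀ β < N, Pmap^[α] (a, b) = Pmap^[β] (a, b) → α = β) ∧
    ((Pmap^[0] (a, b)).2 = b) ∧
    (∀ α (h₁ : 0 < α) (h₂ : α < N), (Pmap^[α] (a, b)).2 = a ⟨N - α, by omega⟩) := by
  have hlt : ∀ i, a i < b := fun i =>
    (ha.monotone (Fin.mk_le_mk.2 (by omega) : i ≤ ⟨N - 1, by omega⟩)).trans_lt hab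
  set s : Fin (N + 1) → ℕ := Fin.snoc a b
  have hs : StrictMono s := strictMono_snoc ha hlt
  have hd : ∀ i, s i ≤ d := fun i =>
    (hs.monotone (Fin.le_last i)).trans (by simpa [s] using hb)
  have hstart : removeNthPair s (Fin.last N) = (a, b) := by simp [removeNthPair, s]
  have hiter : ∀ α < N, Pmap^[α] (a, b) = removeNthPair s ⟨N - α, by omega⟩ := fun α hα =>
    hstart ▸ Pmap_iterate_removeNthPair_last hs hα.le
  have hcontent : ssContent (a, b) = Finset.univ.val.map s :=
    hstart ▸ ssContent_removeNthPair s _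
  refine ⟨fun p => ?_, fun α hα β hβ h => ?_, rfl, fun α h₁ h₂ => ?_⟩
  · rw [hcontent, isSS_and_ssContent_iff hN hs hd]
    constructor
    · rintro ⟨k, hk, rfl⟩
      have hk' : (k : ℕ) ≠ 0 := Fin.val_ne_zero_iff.2 hk
      refine ⟨N - k, by omega, ?_⟩
      rw [hiter _ (by omega)]
      exact congrArg _ (Fin.ext (by dsimp only; omega))
    · rintro ⟨α, hα, rfl⟩
      exact ⟨⟨N - α, by omega⟩, by simp [Fin.ext_iff]; omega, hiter α hα⟩
  · have h2 := congrArg Prod.snd h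
    rw [hiter α hα, hiter β hβ] at h2
    have := Fin.mk.inj (hs.injective h2)
    omega
  · rw [hiter α h₂]
    exact Fin.snoc_castSucc (α := fun _ => ℕ) (i := (⟨N - α, by omega⟩ : Fin N)) ..

end
end

section
/- The vectors F_Δ(i,j) ∈ ⋀^N Sym^d E ⊗ Sym^d E, as (i,j) ranges over all semistandard pairs in I(d,N) × {0,1,…,d}, are linearly independent over F. -/
open MvPolynomial TensorProduct

set_option maxHeartbeats 1000000
set_option synthInstance.maxHeartbeats 400000

noncomputable section

/-- `Sym' F c` : the `c`-th symmetric power of `E = F²`, realised as the space of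
homogeneous polynomials of degree `c` in the two variables `X = X 0`, `Y = X 1`. -/
abbrev Sym' (F : Type*) [Field F] (c : ℕ) : Type _ :=
  ↥(MvPolynomial.homogeneousSubmodule (Fin 2) F c)

variable (F : Type*) [Field F]

/-- The basis monomial `X^(c-i) Y^i` of `Sym' F c`; it is `0` (junk) if `i > c`. -/
def XY (c i : ℕ) : Sym' F c :=
  if h : i ≤ c then
    ⟨(X 0 : MvPolynomial (Fin 2) F) ^ (c - i) * X 1 ^ i, by
      rw [MvPolynomial.mem_homogeneousSubmodule]
      have := ((isHomogeneous_X_pow (R := F) (0 : Fin 2) (c - i)).mul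
        (isHomogeneous_X_pow (R := F) (1 : Fin 2) i))
      rwa [Nat.sub_add_cancel h] at this⟩
  else 0

/-- `F_∧^{(c)}(k) = X^{c-k₁}Y^{k₁} ∧ ⋯ ∧ X^{c-k_r}Y^{k_r}` in `⋀^r (Sym' F c)`. -/
def wedge (c : ℕ) {r : ℕ} (k : Fin r → ℕ) : ⋀[F]^r (Sym' F c) :=
  ⟨ExteriorAlgebra.ιMulti F r fun a => XY F c (k a),
    ExteriorAlgebra.ιMulti_range F r (Set.mem_range_self _)⟩

/-- `F(i,j) = F_∧^{(d)}(i) ⊗ X^{d-j}Y^j`. -/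
def Fp (d : ℕ) {N : ℕ} (i : Fin N → ℕ) (j : ℕ) :
    (⋀[F]^N (Sym' F d)) ⊗[F] (Sym' F d) :=
  wedge F d i ⊗ₜ[F] XY F d j

/-- The multiplication map `μ_N : ⋀^N V ⊗ V → ⋀^{N+1} V` for `V = Sym' F c`. -/
def mu (c N : ℕ) :
    ((⋀[F]^N (Sym' F c)) ⊗[F] (Sym' F c)) →ₗ[F] ⋀[F]^(N + 1) (Sym' F c) :=
  TensorProduct.lift
    (LinearMap.mk₂ F
      (fun w v => ⟨(w : ExteriorAlgebra F (Sym' F c)) * ExteriorAlgebra.ι F v, by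
        have h := Submodule.mul_mem_mul w.2
          (LinearMap.mem_range_self (ExteriorAlgebra.ι F (M := Sym' F c)) v)
        rwa [← pow_succ] at h⟩)
      (fun w w' v => by ext; simp [add_mul])
      (fun a w v => by ext; simp [mul_assoc, Algebra.smul_mul_assoc])
      (fun w v v' => by ext; simp [mul_add])
      (fun a w v => by ext; simp [Algebra.mul_smul_comm]))

/-- The box `B(k) = [k₁,k₂) × ⋯ × [k_N, k_{N+1})` as a finset of multi-indices. -/
def box {N : ℕ} (k : Fin (N + 1) → ℕ) : Finset (Fin N → ℕ) :=
  Fintype.piFinset fun a : Fin N => Finset.Ico (k a.castSucc) (k a.succ)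

/-- `v_{(s,k)} = Σ_{i ∈ B(k)} F(i, s + |k| - N - |i|)`. -/
def vv (d N : ℕ) (s : ℕ) (k : Fin (N + 1) → ℕ) :
    (⋀[F]^N (Sym' F d)) ⊗[F] (Sym' F d) :=
  ∑ i ∈ box k, Fp F d i (s + (∑ a, k a) - N - ∑ a, i a)

/-- `F_Δ(i,j)`. -/
def FDelta (d : ℕ) {N : ℕ} (p : (Fin N → ℕ) × ℕ) :
    (⋀[F]^N (Sym' F d)) ⊗[F] (Sym' F d) :=
  if ∃ a, p.1 a = p.2 then Fp F d p.1 p.2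
  else Fp F d p.1 p.2 + Fp F d (Pmap p).1 (Pmap p).2

/-!
Pair `F(i,j)` with the functional "minor of the coefficient matrix in the columns `i`, times the
coefficient of `X^{d-j}Y^j`"; on strictly increasing `i` these functionals are dual to the `F(i,j)`.
The correction term `F(P(i,j))` of `F_Δ(i,j)` has second index `i_α < j`, so ordering the pairs by
`j` makes the pairing of the `F_Δ` with these functionals unitriangular.
-/

open Module

theorem linearIndependent_of_dual_triangular {R M ι α : Type*} [Ring R] [AddCommGroup M]
    [Module R M] [LinearOrder α] {v : ι → M} (φ : ι → M →ₗ[R] R) (f : ι → α)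
    (h_diag : ∀ i, φ i (v i) = 1) (h_lower : ∀ i j, j ≠ i → f j ≤ f i → φ i (v j) = 0) :
    LinearIndependent R v := by
  classical
  rw [linearIndependent_iff']
  intro s g hsum i hi
  by_contra hgi
  obtain ⟨i₀, hi₀, hmax⟩ :=
    (s.filter (g · ≠ 0)).exists_max_image f ⟨i, Finset.mem_filter.2 ⟨hi, hgi⟩⟩
  rw [Finset.mem_filter] at hi₀
  have hφ : φ i₀ (∑ j ∈ s, g j • v j) = g i₀ := by
    rw [map_sum, Finset.sum_eq_single_of_mem i₀ hi₀.1]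
    · simp [h_diag]
    · intro j hj hji
      by_cases hgj : g j = 0
      · simp [hgj]
      · simp [h_lower i₀ j hji (hmax j (Finset.mem_filter.2 ⟨hj, hgj⟩))]
  exact hi₀.2 (hφ.symm.trans (by rw [hsum, map_zero]))

def coordXY (d j : ℕ) : Dual F (Sym' F d) :=
  (lcoeff F (Finsupp.single 0 (d - j) + Finsupp.single 1 j)).comp (Submodule.subtype _)

lemma coordXY_XY {d j : ℕ} (hj : j ≤ d) (j' : ℕ) :
    coordXY F d j (XY F d j') = if j = j' then 1 else 0 := by
  by_cases hj' : j' ≤ d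
  · rw [XY, dif_pos hj']
    simp only [coordXY, LinearMap.comp_apply, Submodule.coe_subtype, lcoeff_apply]
    rw [X_pow_eq_monomial, X_pow_eq_monomial, monomial_mul, mul_one, coeff_monomial]
    have hexp : Finsupp.single (0 : Fin 2) (d - j') + Finsupp.single 1 j'
        = Finsupp.single 0 (d - j) + Finsupp.single 1 j ↔ j = j' := by
      refine ⟨fun h => ?_, fun h => h ▸ rfl⟩
      simpa [Finsupp.single_apply] using (DFunLike.congr_fun h 1).symm
    simp only [hexp]
  · rw [XY, dif_neg hj', map_zero, if_neg (by omega)]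

def finEmbOfStrictMono {n d : ℕ} {i : Fin n → ℕ} (hi : StrictMono i) (hid : ∀ a, i a ≤ d) :
    Fin n ↪o Fin (d + 1) :=
  OrderEmbedding.ofStrictMono (fun a => ⟨i a, Nat.lt_succ_of_le (hid a)⟩) fun _ _ h => hi h

def wedgeDual (d : ℕ) {n : ℕ} (i : Fin n → ℕ) : Dual F (⋀[F]^n (Sym' F d)) :=
  exteriorPower.pairingDual F (Sym' F d) n (exteriorPower.ιMulti F n fun a => coordXY F d (i a))

lemma wedgeDual_wedge {d n : ℕ} {i k : Fin n → ℕ} (hi : StrictMono i) (hid : ∀ a, i a ≤ d)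
    (hk : StrictMono k) (hkd : ∀ a, k a ≤ d) :
    wedgeDual F d i (wedge F d k) = if i = k then 1 else 0 := by
  have h₁ (j : Fin (d + 1)) : coordXY F d j (XY F d j) = 1 := by
    rw [coordXY_XY F (Nat.le_of_lt_succ j.2), if_pos rfl]
  have h₀ ⦃j j' : Fin (d + 1)⦄ (h : j ≠ j') : coordXY F d j (XY F d j') = 0 := by
    rw [coordXY_XY F (Nat.le_of_lt_succ j.2), if_neg (Fin.val_ne_of_ne h)]
  split_ifs with hik
  · subst hik
    exact exteriorPower.pairingDual_apply_apply_eq_one (fun j : Fin (d + 1) => XY F d j)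
      (fun j => coordXY F d j) h₁ h₀ n (finEmbOfStrictMono hi hid)
  · refine exteriorPower.pairingDual_apply_apply_eq_one_zero (fun j : Fin (d + 1) => XY F d j)
      (fun j => coordXY F d j) h₀ n (finEmbOfStrictMono hi hid) (finEmbOfStrictMono hk hkd)
      fun h => hik (funext fun a => congrArg Fin.val (DFunLike.congr_fun h a))

def FpDual (d : ℕ) {n : ℕ} (q : (Fin n → ℕ) × ℕ) :
    Dual F ((⋀[F]^n (Sym' F d)) ⊗[F] Sym' F d) :=
  dualDistrib F _ _ (wedgeDual F d q.1 ⊗ₜ coordXY F d q.2)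

lemma FpDual_Fp_of_snd_ne {d n : ℕ} {q : (Fin n → ℕ) × ℕ} (hq : q.2 ≤ d) (i : Fin n → ℕ)
    {j : ℕ} (hj : q.2 ≠ j) : FpDual F d q (Fp F d i j) = 0 := by
  rw [FpDual, Fp, dualDistrib_apply, coordXY_XY F hq, if_neg hj, mul_zero]

lemma FpDual_Fp {d n : ℕ} {q p : (Fin n → ℕ) × ℕ} (hq₁ : StrictMono q.1)
    (hq₁d : ∀ a, q.1 a ≤ d) (hq₂ : q.2 ≤ d) (hp₁ : StrictMono p.1) (hp₁d : ∀ a, p.1 a ≤ d) :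
    FpDual F d q (Fp F d p.1 p.2) = if q = p then 1 else 0 := by
  rw [FpDual, Fp, dualDistrib_apply, wedgeDual_wedge F hq₁ hq₁d hp₁ hp₁d, coordXY_XY F hq₂]
  by_cases h₁ : q.1 = p.1 <;> by_cases h₂ : q.2 = p.2 <;> simp [h₁, h₂, Prod.ext_iff]

lemma Pmap_snd_lt {n : ℕ} {p : (Fin n → ℕ) × ℕ} {a : Fin n} (ha : p.1 a ≤ p.2)
    (hne : ∀ b, p.1 b ≠ p.2) : (Pmap p).2 < p.2 := by
  have hs : (Finset.univ.filter fun b => p.1 b ≤ p.2).Nonempty := ⟨a, by simp [ha]⟩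
  rw [Pmap, dif_pos hs]
  exact lt_of_le_of_ne (Finset.mem_filter.1 (Finset.max'_mem _ hs)).2 (hne _)

lemma FpDual_FDelta {d n : ℕ} (hn : 0 < n) {q p : (Fin n → ℕ) × ℕ} (hq : IsSS d q)
    (hp : IsSS d p) (hle : p.2 ≤ q.2) :
    FpDual F d q (FDelta F d p) = if q = p then 1 else 0 := by
  obtain ⟨hq₁, hq₁d, hq₂, -⟩ := hq
  obtain ⟨hp₁, hp₁d, -, hp₀⟩ := hp
  have hFp := FpDual_Fp F hq₁ hq₁d hq₂ hp₁ hp₁d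
  rw [FDelta]
  by_cases hex : ∃ a, p.1 a = p.2
  · rw [if_pos hex, hFp]
  · have hP := Pmap_snd_lt (hp₀ ⟨0, hn⟩ rfl) (not_exists.1 hex)
    rw [if_neg hex, map_add, hFp, FpDual_Fp_of_snd_ne F hq₂ _ (by omega), add_zero]

/-- Lemma 2.2 of the paper. The vectors `F_Δ(i,j)`, for `(i,j)` ranging over the
semistandard pairs in `I(d,N) × {0,…,d}`, are linearly independent over `F`. -/
theorem statement2 (F : Type*) [Field F] (N d : ℕ) (hN : 0 < N) :
    LinearIndependent F
      (fun p : {p : (Fin N → ℕ) × ℕ // IsSS d p} => FDelta F d p.1) :=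
  linearIndependent_of_dual_triangular (M := (⋀[F]^N (Sym' F d)) ⊗[F] Sym' F d)
    (fun q : {p // IsSS d p} => FpDual F d q.1) (fun p => p.1.2)
    (fun q => by rw [FpDual_FDelta F hN q.2 q.2 le_rfl, if_pos rfl])
    (fun q p hpq hle => by
      rw [FpDual_FDelta F hN q.2 p.2 hle, if_neg fun h => hpq (Subtype.ext h.symm)])
end
end

section
/- For α ∈ {1,…,N} let S_α be the set of semistandard pairs (i,j) ∈ I(d,N) × {0,1,…,d} such that i_α ≤ j, and additionally j < i_{α+1} when α < N. Then the sets S_1,…,S_N partition the set of all semistandard pairs, and for each α the map (i,j) ↦ (i_1,…,i_α, j+1, i_{α+1}+1, i_{α+2}+1,…,i_N+1) is a bijection from S_α onto the set of strictly increasing multi-indices in I(d+1, N+1); in particular every S_α has cardinality C(d+2, N+1). -/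
/-! A semistandard pair `(i, j)` lies in `S_α` exactly for the last `α` with `i_α ≤ j`, which
exists because `i_1 ≤ j`; so the `S_α` partition the semistandard pairs. The map `emb α` inserts
`j + 1` after position `α` and shifts the later entries up by one, so that `i_α ≤ j < i_{α+1}`
becomes `i_α < j + 1 < i_{α+1} + 1`; deleting position `α + 1` and shifting back inverts it.
Strictly increasing maps `Fin n → {0,…,m}` are the `n`-subsets of `{0,…,m}`, hence there are
`C(m+1, n)` of them. -/

noncomputable section

/-- The set `S_α` of semistandard pairs `(i,j)` with `i_α ≤ j`, and `j < i_{α+1}` when `α < N`. -/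
def Sset (d : ℕ) {N : ℕ} (α : Fin N) : Set ((Fin N → ℕ) × ℕ) :=
  {p | IsSS d p ∧ p.1 α ≤ p.2 ∧ ∀ h : (α : ℕ) + 1 < N, p.2 < p.1 ⟨(α : ℕ) + 1, h⟩}

/-- The map `(i,j) ↦ (i₁,…,i_α, j+1, i_{α+1}+1, …, i_N+1)`. -/
def emb {N : ℕ} (α : Fin N) (p : (Fin N → ℕ) × ℕ) : Fin (N + 1) → ℕ := fun b =>
  if hb : (b : ℕ) ≤ (α : ℕ) then p.1 ⟨b, lt_of_le_of_lt hb α.isLt⟩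
  else if (b : ℕ) = (α : ℕ) + 1 then p.2 + 1
  else p.1 ⟨(b : ℕ) - 1, by have := b.isLt; omega⟩ + 1


open Finset in
theorem ncard_setOf_strictMono_le (n m : ℕ) :
    {k : Fin n → ℕ | StrictMono k ∧ ∀ b, k b ≤ m}.ncard = (m + 1).choose n := by
  set S := {k : Fin n → ℕ | StrictMono k ∧ ∀ b, k b ≤ m}
  have hinj : Set.InjOn (fun k => univ.image k) S := by
    intro k hk l hl hkl
    rw [← hk.1.range_inj hl.1, ← Set.image_univ, ← Set.image_univ, ← coe_univ, ← coe_image,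
      ← coe_image]
    exact congrArg _ hkl
  have himage :
      (fun k => univ.image k) '' S = (powersetCard n (range (m + 1)) : Set (Finset ℕ)) := by
    ext s
    simp only [Set.mem_image, mem_coe, mem_powersetCard]
    constructor
    · rintro ⟨k, ⟨hk, hkm⟩, rfl⟩
      refine ⟨fun x hx => ?_, ?_⟩
      · obtain ⟨b, -, rfl⟩ := mem_image.1 hx
        exact mem_range.2 (Nat.lt_succ_of_le (hkm b))
      · rw [card_image_of_injective _ hk.injective, card_univ, Fintype.card_fin]
    · rintro ⟨hs, hcard⟩
      refine ⟨fun b => s.orderEmbOfFin hcard b,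
        ⟨(s.orderEmbOfFin hcard).strictMono, fun b => ?_⟩, by simp⟩
      exact Nat.le_of_lt_succ (mem_range.1 (hs (s.orderEmbOfFin_mem hcard b)))
  rw [← hinj.ncard_image, himage, Set.ncard_coe_finset, card_powersetCard, card_range]

section emb

variable {N : ℕ} (α : Fin N)

theorem emb_of_le (p : (Fin N → ℕ) × ℕ) {b : Fin (N + 1)} (h : (b : ℕ) ≤ α) :
    emb α p b = p.1 ⟨b, by omega⟩ :=
  dif_pos h

theorem emb_of_eq (p : (Fin N → ℕ) × ℕ) {b : Fin (N + 1)} (h : (b : ℕ) = α + 1) :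
    emb α p b = p.2 + 1 := by
  rw [emb, dif_neg (by omega), if_pos h]

theorem emb_of_gt (p : (Fin N → ℕ) × ℕ) {b : Fin (N + 1)} (h : (α : ℕ) + 1 < b) :
    emb α p b = p.1 ⟨b - 1, by omega⟩ + 1 := by
  rw [emb, dif_neg (by omega), if_neg (by omega)]

theorem mapsTo_emb {d : ℕ} :
    Set.MapsTo (emb α) (Sset d α) {k | StrictMono k ∧ ∀ b, k b ≤ d + 1} := by
  rintro p ⟨⟨hi, hid, hjd, -⟩, hαj, hjα⟩
  refine ⟨Fin.strictMono_iff_lt_succ.2 fun c => ?_, fun b => ?_⟩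
  · rcases lt_trichotomy (c : ℕ) α with hc | hc | hc
    · rw [emb_of_le α p (by simpa using hc.le), emb_of_le α p (by simpa using hc)]
      exact hi (Fin.mk_lt_mk.2 (by simp))
    · rw [emb_of_le α p (by simp [hc]), emb_of_eq α p (by simp [hc])]
      exact Nat.lt_succ_of_le (by simpa [Fin.ext_iff, hc] using hαj)
    · rcases (show (α : ℕ) + 1 ≤ c by omega).eq_or_lt with hc' | hc'
      · rw [emb_of_eq α p (by simp [hc']), emb_of_gt α p (by simp; omega)]
        exact Nat.succ_lt_succ (by simpa [← hc'] using hjα (by omega))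
      · rw [emb_of_gt α p (by simpa using hc'), emb_of_gt α p (by simp; omega)]
        exact Nat.succ_lt_succ (hi (Fin.mk_lt_mk.2 (by simp; omega)))
  · rcases lt_trichotomy (b : ℕ) (α + 1) with hb | hb | hb
    · rw [emb_of_le α p (by omega)]; exact (hid _).trans d.le_succ
    · rw [emb_of_eq α p hb]; exact Nat.succ_le_succ hjd
    · rw [emb_of_gt α p hb]; exact Nat.succ_le_succ (hid _)

def embInv (k : Fin (N + 1) → ℕ) : (Fin N → ℕ) × ℕ :=
  (fun a => if a ≤ α then k a.castSucc else k a.succ - 1, k α.succ - 1)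

theorem embInv_fst_of_le (k : Fin (N + 1) → ℕ) {a : Fin N} (h : a ≤ α) :
    (embInv α k).1 a = k a.castSucc :=
  if_pos h

theorem embInv_fst_of_lt (k : Fin (N + 1) → ℕ) {a : Fin N} (h : α < a) :
    (embInv α k).1 a = k a.succ - 1 :=
  if_neg h.not_ge

theorem embInv_snd (k : Fin (N + 1) → ℕ) : (embInv α k).2 = k α.succ - 1 :=
  rfl

theorem embInv_emb (p : (Fin N → ℕ) × ℕ) : embInv α (emb α p) = p := by
  refine Prod.ext (funext fun a => ?_) ?_
  · rcases le_or_gt a α with ha | ha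
    · rw [embInv_fst_of_le α _ ha, emb_of_le α p (by simpa using ha)]
      rfl
    · rw [embInv_fst_of_lt α _ ha, emb_of_gt α p (by simpa using ha), Nat.add_sub_cancel]
      simp
  · rw [embInv_snd, emb_of_eq α p (by simp), Nat.add_sub_cancel]

theorem emb_embInv {k : Fin (N + 1) → ℕ} (hk : StrictMono k) : emb α (embInv α k) = k := by
  have hpos : ∀ b : Fin (N + 1), (b : ℕ) ≠ 0 → 1 ≤ k b := fun b hb =>
    (Nat.zero_le _).trans_lt (hk (show 0 < b from Fin.lt_def.2 (Nat.pos_of_ne_zero hb)))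
  funext b
  rcases lt_trichotomy (b : ℕ) (α + 1) with hb | hb | hb
  · rw [emb_of_le α _ (by omega), embInv_fst_of_le α _ (Fin.mk_le_of_le_val (by omega))]
    rfl
  · obtain rfl : b = α.succ := Fin.ext (by simpa using hb)
    rw [emb_of_eq α _ hb, embInv_snd, Nat.sub_add_cancel (hpos _ (by simp))]
  · obtain ⟨c, rfl⟩ : ∃ c : Fin N, b = c.succ :=
      ⟨⟨b - 1, by omega⟩, Fin.ext (by simp; omega)⟩
    rw [emb_of_gt α _ hb, embInv_fst_of_lt α _ (Fin.lt_def.2 (by simp at hb ⊢; omega))]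
    simp only [Fin.val_succ, Nat.add_sub_cancel, Fin.eta]
    exact Nat.sub_add_cancel (hpos _ (by simp))

theorem mapsTo_embInv {d : ℕ} :
    Set.MapsTo (embInv α) {k | StrictMono k ∧ ∀ b, k b ≤ d + 1} (Sset d α) := by
  rintro k ⟨hk, hkd⟩
  have step : ∀ a : Fin N, k a.castSucc < k a.succ := fun a => hk a.castSucc_lt_succ
  have fst_le : ∀ a, (embInv α k).1 a ≤ d := fun a => by
    rcases le_or_gt a α with ha | ha
    · rw [embInv_fst_of_le α k ha]
      have := hk (Fin.castSucc_lt_last a); have := hkd (Fin.last N); omega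
    · rw [embInv_fst_of_lt α k ha]; have := hkd a.succ; omega
  refine ⟨⟨fun a b hab => ?_, fst_le, ?_, fun a ha => ?_⟩, ?_, fun h => ?_⟩
  · rcases le_or_gt b α with hb | hb
    · rw [embInv_fst_of_le α k (hab.le.trans hb), embInv_fst_of_le α k hb]
      exact hk (Fin.castSucc_lt_castSucc_iff.2 hab)
    rcases le_or_gt a α with ha | ha
    · rw [embInv_fst_of_le α k ha, embInv_fst_of_lt α k hb]
      have := hk (Fin.castSucc_lt_castSucc_iff.2 hab); have := step b; omega
    · rw [embInv_fst_of_lt α k ha, embInv_fst_of_lt α k hb]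
      have := hk (Fin.succ_lt_succ_iff.2 hab); have := step a; omega
  · rw [embInv_snd]; have := hkd α.succ; omega
  · have ha' : a ≤ α := Fin.le_def.2 (by omega)
    rw [embInv_fst_of_le α k ha', embInv_snd]
    have := hk (Fin.castSucc_lt_succ_iff.2 ha'); omega
  · rw [embInv_fst_of_le α k le_rfl, embInv_snd]; have := step α; omega
  · have hα : α < ⟨α + 1, h⟩ := Fin.lt_def.2 (Nat.lt_succ_self _)
    rw [embInv_fst_of_lt α k hα, embInv_snd]
    have := hk (Fin.succ_lt_succ_iff.2 hα); have := step α; omega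

theorem bijOn_emb (d : ℕ) :
    Set.BijOn (emb α) (Sset d α) {k | StrictMono k ∧ ∀ b, k b ≤ d + 1} :=
  Set.InvOn.bijOn ⟨fun p _ => embInv_emb α p, fun _ hk => emb_embInv α hk.1⟩
    (mapsTo_emb α) (mapsTo_embInv α)

end emb

theorem exists_mem_Sset {N d : ℕ} (hN : 0 < N) {p : (Fin N → ℕ) × ℕ} (hp : IsSS d p) :
    ∃ α, p ∈ Sset d α := by
  obtain ⟨α, hα, hmax⟩ :=
    (Finset.univ.filter fun a : Fin N => p.1 a ≤ p.2).exists_max_image id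
      ⟨⟨0, hN⟩, Finset.mem_filter.2 ⟨Finset.mem_univ _, hp.2.2.2 _ rfl⟩⟩
  refine ⟨α, hp, (Finset.mem_filter.1 hα).2, fun h => lt_of_not_ge fun hle => ?_⟩
  have := hmax ⟨α + 1, h⟩ (Finset.mem_filter.2 ⟨Finset.mem_univ _, hle⟩)
  exact absurd (Fin.le_def.1 this) (by simp)

theorem disjoint_Sset_of_lt {N d : ℕ} {α β : Fin N} (h : α < β) :
    Disjoint (Sset d α) (Sset d β) := by
  refine Set.disjoint_left.2 ?_
  rintro p ⟨⟨hi, -⟩, -, hjα⟩ ⟨-, hβj, -⟩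
  have hα : (α : ℕ) + 1 < N := by omega
  have := hi.monotone (show (⟨α + 1, hα⟩ : Fin N) ≤ β from Fin.le_def.2 h)
  exact absurd (hjα hα) (by omega)

/-- proof of Lemma 2.4 of the paper. The sets `S₁,…,S_N` partition the set of
semistandard pairs; for each `α` the map `(i,j) ↦ (i₁,…,i_α, j+1, i_{α+1}+1,…,i_N+1)` is a
bijection from `S_α` onto the strictly increasing multi-indices in `I(d+1, N+1)`; in particular
each `S_α` has cardinality `C(d+2, N+1)`. -/
theorem statement4 (N d : ℕ) (hN : 0 < N) :
    (⋃ α : Fin N, Sset d α) = {p : (Fin N → ℕ) × ℕ | IsSS d p} ∧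
    (∀ α β : Fin N, α ≠ β → Disjoint (Sset d α) (Sset d β)) ∧
    (∀ α : Fin N, Set.BijOn (emb α) (Sset d α)
      {k : Fin (N + 1) → ℕ | StrictMono k ∧ ∀ b, k b ≤ d + 1}) ∧
    (∀ α : Fin N, (Sset d α).ncard = (d + 2).choose (N + 1)) := by
  refine ⟨?_, fun α β hne => ?_, fun α => bijOn_emb α d, fun α => ?_⟩
  · ext p
    simp only [Set.mem_iUnion]
    exact ⟨fun ⟨_, hp⟩ => hp.1, exists_mem_Sset hN⟩
  · rcases hne.lt_or_gt with h | h
    exacts [disjoint_Sset_of_lt h, (disjoint_Sset_of_lt h).symm]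
  · rw [← (bijOn_emb α d).injOn.ncard_image, (bijOn_emb α d).image_eq]
    exact ncard_setOf_strictMono_le (N + 1) (d + 1)

end
end

section
/- Let F be a field, N ≥ 1 and d ≥ 0. The vector space Δ^{(2,1^{N−1})}Sym^d E = ker(μ_N : ⋀^N Sym^d E ⊗ Sym^d E → ⋀^{N+1} Sym^d E) has dimension N·C(d+2, N+1) over F. -/
open MvPolynomial TensorProduct

set_option maxHeartbeats 1000000
set_option synthInstance.maxHeartbeats 400000

noncomputable section

variable (F : Type*) [Field F]

open TensorProduct in
noncomputable instance kerMuAddCommGroup (F : Type*) [Field F] (c N : ℕ) :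
    AddCommGroup ↥(LinearMap.ker (mu F c N)) :=
  letI big : AddCommGroup ((⋀[F]^N (Sym' F c)) ⊗[F] (Sym' F c)) := inferInstance
  letI mod : Module F ((⋀[F]^N (Sym' F c)) ⊗[F] (Sym' F c)) := inferInstance
  @Submodule.addCommGroup F _ _ big mod _

open TensorProduct in
noncomputable instance kerMuModule (F : Type*) [Field F] (c N : ℕ) :
    Module F ↥(LinearMap.ker (mu F c N)) :=
  letI big : AddCommGroup ((⋀[F]^N (Sym' F c)) ⊗[F] (Sym' F c)) := inferInstance
  letI mod : Module F ((⋀[F]^N (Sym' F c)) ⊗[F] (Sym' F c)) := inferInstance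
  @Submodule.module F _ _ big.toAddCommMonoid mod _

/-! The map `μ_N` is onto, since `⋀^{N+1} V = ⋀^N V · V` inside the exterior algebra, so by
rank–nullity the kernel has dimension `C(d+1, N)·(d+1) − C(d+1, N+1)`, which Pascal's rule
rewrites as `N·C(d+2, N+1)`. -/

namespace MvPolynomial

theorem finrank_homogeneousSubmodule (σ K : Type*) [Fintype σ] [Field K] (n : ℕ) :
    Module.finrank K (homogeneousSubmodule σ K n) = (Fintype.card σ + n - 1).choose n := by
  classical
  have hdeg : {d : σ →₀ ℕ | d.degree = n} =
      ((Finset.univ : Finset σ).finsuppAntidiag n : Set (σ →₀ ℕ)) := by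
    ext d
    simp [Finset.mem_finsuppAntidiag, Finsupp.degree_eq_sum]
  rw [(LinearEquiv.ofEq _ _ (homogeneousSubmodule_eq_finsupp_supported σ K n)).finrank_eq,
    (AddMonoidAlgebra.supportedEquivFinsupp _).finrank_eq, hdeg, Module.finrank_finsupp_self]
  simp only [Finset.coe_sort_coe, Fintype.card_coe]
  rw [Finset.card_finsuppAntidiag_nat_eq_choose, Finset.card_univ]

end MvPolynomial

theorem finrank_sym' (F : Type*) [Field F] (c : ℕ) : Module.finrank F (Sym' F c) = c + 1 := by
  rw [MvPolynomial.finrank_homogeneousSubmodule, Fintype.card_fin, show 2 + c - 1 = c + 1 by omega,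
    Nat.choose_succ_self_right]

instance Sym'.instFinite (F : Type*) [Field F] (c : ℕ) : Module.Finite F (Sym' F c) :=
  Module.Finite.iff_fg.mpr (MvPolynomial.homogeneousSubmodule_fg (Fin 2) F c)

theorem mu_surjective (F : Type*) [Field F] (c N : ℕ) : Function.Surjective (mu F c N) := by
  have hle : LinearMap.range (ExteriorAlgebra.ι F) ^ (N + 1) ≤
      LinearMap.range ((⋀[F]^(N + 1) (Sym' F c)).subtype ∘ₗ mu F c N) := by
    rw [pow_succ, Submodule.mul_le]
    rintro w hw _ ⟨v, rfl⟩
    exact ⟨⟨w, hw⟩ ⊗ₜ v, rfl⟩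
  intro x
  obtain ⟨y, hy⟩ := hle x.2
  exact ⟨y, Subtype.ext hy⟩

theorem Nat.choose_mul_eq_choose_succ_add_mul_choose_succ_succ (n k : ℕ) :
    n.choose k * n = n.choose (k + 1) + k * (n + 1).choose (k + 1) := by
  rcases le_or_gt k n with hkn | hnk
  · calc n.choose k * n = n.choose k * (n - k) + k * n.choose k := by
          rw [mul_comm k, ← Nat.mul_add, Nat.sub_add_cancel hkn]
      _ = n.choose (k + 1) * (k + 1) + k * n.choose k := by rw [Nat.choose_succ_right_eq]
      _ = n.choose (k + 1) + k * (n.choose k + n.choose (k + 1)) := by ring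
      _ = n.choose (k + 1) + k * (n + 1).choose (k + 1) := by rw [Nat.choose_succ_succ]
  · rw [Nat.choose_eq_zero_of_lt hnk, Nat.choose_eq_zero_of_lt (by omega),
      Nat.choose_eq_zero_of_lt (by omega)]
    simp

theorem statement5_general (F : Type*) [Field F] (N d : ℕ) :
    Module.finrank F ↥(LinearMap.ker (mu F d N)) = N * (d + 2).choose (N + 1) := by
  have rank_nullity := LinearMap.finrank_range_add_finrank_ker (K := F)
    (V := (⋀[F]^N (Sym' F d)) ⊗[F] (Sym' F d)) (mu F d N)
  rw [LinearMap.range_eq_top.mpr (mu_surjective F d N), finrank_top, Module.finrank_tensorProduct,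
    exteriorPower.finrank_eq, exteriorPower.finrank_eq, finrank_sym',
    Nat.choose_mul_eq_choose_succ_add_mul_choose_succ_succ, show d + 1 + 1 = d + 2 from rfl]
    at rank_nullity
  omega

/-- Proposition 2.5 of the paper. The space
`Δ^{(2,1^{N-1})} Sym^d E = ker (μ_N : ⋀^N Sym^d E ⊗ Sym^d E → ⋀^{N+1} Sym^d E)` has dimension
`N * C(d+2, N+1)` over `F`. -/
theorem statement5 (F : Type*) [Field F] (N d : ℕ) (hN : 0 < N) :
    Module.finrank F ↥(LinearMap.ker (mu F d N)) = N * (d + 2).choose (N + 1) :=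
  statement5_general F N d

end
end

section
/- The vectors F_Δ(i,j), as (i,j) ranges over all semistandard pairs in I(d,N) × {0,1,…,d}, form a basis of the vector space Δ^{(2,1^{N−1})}Sym^d E = ker μ_N. -/
open MvPolynomial TensorProduct

set_option maxHeartbeats 1000000
set_option synthInstance.maxHeartbeats 400000

noncomputable section

variable (F : Type*) [Field F]

/-!
The monomials `X^(d-j) Y^j` form a basis of `Sym^d E`, so the `F(i,j)` with `i` strictly
increasing form a basis of `⋀^N Sym^d E ⊗ Sym^d E`. Replacing `F(i,j)` by `F_Δ(i,j)` for every
semistandard pair still gives a spanning family of the same size, hence a basis: the correction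
`F(P(i,j))` has a smaller second index, so induction on `j` recovers every `F(i,j)`.
Each `F_Δ(i,j)` is killed by `μ_N`, either because of a repeated factor or because its two terms
differ by a transposition. The remaining basis vectors `F(i,j)` with `j < i₁` are sent by `μ_N` to
`±` distinct basis wedges of `⋀^(N+1) Sym^d E`, so `μ_N` is injective on their span, and the kernel
of `μ_N` is exactly the span of the `F_Δ(i,j)`.
-/

theorem StrictMono.update {ι α : Type*} [Preorder ι] [DecidableEq ι] [Preorder α] {f : ι → α}
    (hf : StrictMono f) {a : ι} {x : α} (hlt : f a < x) (hgt : ∀ b, a < b → x < f b) :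
    StrictMono (Function.update f a x) := by
  intro b c hbc
  by_cases hb : b = a <;> by_cases hc : c = a
  · exact absurd (hb.trans hc.symm ▸ hbc) (lt_irrefl c)
  · subst hb; simpa [hc] using hgt c hbc
  · subst hc; simpa [hb] using (hf hbc).trans hlt
  · simpa [hb, hc] using hf hbc

theorem Fin.snoc_comp_update_eq_comp_swap {α β : Type*} {N : ℕ} (f : β → α) (v : Fin N → β)
    (a : Fin N) (x : β) :
    (Fin.snoc (f ∘ Function.update v a x) (f (v a)) : Fin (N + 1) → α) =
      Fin.snoc (f ∘ v) (f x) ∘ Equiv.swap a.castSucc (Fin.last N) := by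
  ext b
  induction b using Fin.lastCases with
  | last => simp
  | cast c =>
    rcases eq_or_ne c a with rfl | hc
    · simp
    · rw [Function.comp_apply, Equiv.swap_apply_of_ne_of_ne (Fin.castSucc_injective _ |>.ne hc)
        (Fin.castSucc_lt_last c).ne]
      simp [hc]

theorem LinearIndependent.of_span_eq_top_of_basis {ι K M : Type*} [Finite ι] [Field K]
    [AddCommMonoid M] [Module K M] (b : Module.Basis ι K M) {v : ι → M}
    (hv : Submodule.span K (Set.range v) = ⊤) : LinearIndependent K v := by
  have := Fintype.ofFinite ι
  have := Module.Finite.of_basis b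
  exact linearIndependent_of_top_le_span_of_card_eq_finrank hv.ge
    (Module.finrank_eq_card_basis b).symm

theorem LinearMap.ker_le_of_sup_eq_top {R M M' : Type*} [Semiring R] [AddCommMonoid M]
    [AddCommMonoid M'] [Module R M] [Module R M'] {f : M →ₗ[R] M'} {A B : Submodule R M}
    (hA : A ≤ ker f) (hB : Disjoint B (ker f)) (hAB : A ⊔ B = ⊤) : ker f ≤ A := by
  intro x hx
  obtain ⟨y, hy, z, hz, rfl⟩ := Submodule.mem_sup.1 (hAB ▸ Submodule.mem_top : x ∈ A ⊔ B)
  have hfz : f z = 0 := by rwa [mem_ker, map_add, mem_ker.1 (hA hy), zero_add] at hx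
  rw [Submodule.disjoint_def.1 hB z hz hfz, add_zero]
  exact hy

def xyExponent (d j : ℕ) : Fin 2 →₀ ℕ := Finsupp.single 0 (d - j) + Finsupp.single 1 j

lemma xyExponent_injective (d : ℕ) :
    Function.Injective fun j : Fin (d + 1) => xyExponent d j := by
  intro j k h
  simpa [xyExponent, Fin.ext_iff] using DFunLike.congr_fun h 1

lemma range_xyExponent (d : ℕ) :
    Set.range (fun j : Fin (d + 1) => xyExponent d j) = {m | m.degree = d} := by
  ext m
  simp only [Set.mem_range, Set.mem_ofPred_eq, Finsupp.degree_eq_sum, Fin.sum_univ_two]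
  constructor
  · rintro ⟨j, rfl⟩
    simp [xyExponent]
    omega
  · intro hm
    refine ⟨⟨m 1, by omega⟩, ?_⟩
    ext a
    fin_cases a
    · simp [xyExponent]
      omega
    · simp [xyExponent]

lemma coe_XY {d j : ℕ} (hj : j ≤ d) :
    (XY F d j : MvPolynomial (Fin 2) F) = monomial (xyExponent d j) 1 := by
  simp [XY, hj, xyExponent, X_pow_eq_monomial, monomial_mul]

lemma subtype_comp_XY (d : ℕ) :
    (homogeneousSubmodule (Fin 2) F d).subtype ∘ (fun j : Fin (d + 1) => XY F d j) =
      (monomial · (1 : F)) ∘ fun j : Fin (d + 1) => xyExponent d j := by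
  ext1 j
  simp [coe_XY F j.is_le]

lemma linearIndependent_XY (d : ℕ) :
    LinearIndependent F fun j : Fin (d + 1) => XY F d j := by
  apply LinearIndependent.of_comp (homogeneousSubmodule (Fin 2) F d).subtype
  rw [subtype_comp_XY, ← coe_basisMonomials]
  exact (basisMonomials (Fin 2) F).linearIndependent.comp _ (xyExponent_injective d)

lemma span_XY (d : ℕ) :
    Submodule.span F (Set.range fun j : Fin (d + 1) => XY F d j) = ⊤ := by
  apply Submodule.map_injective_of_injective (homogeneousSubmodule (Fin 2) F d).injective_subtype
  rw [Submodule.map_span, ← Set.range_comp, Submodule.map_top, Submodule.range_subtype,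
    subtype_comp_XY, Set.range_comp, range_xyExponent, ← restrictSupport_eq_span,
    restrictSupport, homogeneousSubmodule_eq_finsupp_supported]

def symBasis (d : ℕ) : Module.Basis (Fin (d + 1)) F (Sym' F d) :=
  .mk (linearIndependent_XY F d) (span_XY F d).ge

@[simp]
lemma symBasis_apply (d : ℕ) (j : Fin (d + 1)) : symBasis F d j = XY F d j :=
  Module.Basis.mk_apply ..

abbrev StrictTuple (d N : ℕ) : Type := {i : Fin N → ℕ // StrictMono i ∧ ∀ a, i a ≤ d}

def StrictTuple.equivOrderEmbedding (d N : ℕ) : StrictTuple d N ≃ (Fin N ↪o Fin (d + 1)) where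
  toFun i := OrderEmbedding.ofStrictMono (fun a => ⟨i.1 a, Nat.lt_succ_of_le (i.2.2 a)⟩)
    fun _ _ h => i.2.1 h
  invFun t := ⟨fun a => t a, fun _ _ h => t.strictMono h, fun a => (t a).is_le⟩
  left_inv _ := rfl
  right_inv _ := rfl

instance (d N : ℕ) : Finite (StrictTuple d N) :=
  .of_equiv _ (StrictTuple.equivOrderEmbedding d N).symm

def wedgeBasis (d N : ℕ) : Module.Basis (StrictTuple d N) F (⋀[F]^N (Sym' F d)) :=
  ((symBasis F d).exteriorPower N).reindex
    ((StrictTuple.equivOrderEmbedding d N).trans Set.powersetCard.ofFinEmbEquiv).symm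

lemma wedge_eq_ιMulti (d : ℕ) {N : ℕ} (i : Fin N → ℕ) :
    wedge F d i = exteriorPower.ιMulti F N (XY F d ∘ i) := rfl

@[simp]
lemma wedgeBasis_apply (d N : ℕ) (i : StrictTuple d N) : wedgeBasis F d N i = wedge F d i.1 := by
  simp only [wedgeBasis, Module.Basis.reindex_apply, Equiv.symm_symm, Equiv.trans_apply,
    exteriorPower.basis_apply, exteriorPower.ιMulti_family, Equiv.symm_apply_apply,
    wedge_eq_ιMulti]
  congr 1
  ext1 a
  rw [Function.comp_apply, symBasis_apply]
  rfl

def FpBasis (d N : ℕ) :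
    Module.Basis (StrictTuple d N × Fin (d + 1)) F ((⋀[F]^N (Sym' F d)) ⊗[F] (Sym' F d)) :=
  (wedgeBasis F d N).tensorProduct (symBasis F d)

@[simp]
lemma FpBasis_apply (d N : ℕ) (q : StrictTuple d N × Fin (d + 1)) :
    FpBasis F d N q = Fp F d q.1.1 q.2 := by
  rw [FpBasis, Module.Basis.tensorProduct_apply, wedgeBasis_apply, symBasis_apply, Fp]

lemma mu_Fp (d : ℕ) {N : ℕ} (i : Fin N → ℕ) (j : ℕ) :
    mu F d N (Fp F d i j) = exteriorPower.ιMulti F (N + 1) (Fin.snoc (XY F d ∘ i) (XY F d j)) := by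
  ext1
  rw [Fp, mu, TensorProduct.lift.tmul, exteriorPower.ιMulti_apply_coe,
    ExteriorAlgebra.ιMulti_apply, List.ofFn_succ', List.concat_eq_append, List.prod_append,
    List.prod_singleton]
  simp only [Fin.snoc_castSucc, Fin.snoc_last]
  rfl

lemma mu_Fp_eq_smul_wedge_cons (d : ℕ) {N : ℕ} (i : Fin N → ℕ) (j : ℕ) :
    mu F d N (Fp F d i j) = (-1 : F) ^ N • wedge F d (Fin.cons j i : Fin (N + 1) → ℕ) := by
  rw [mu_Fp, Fin.snoc_eq_cons_rotate, ← Function.comp_def (Fin.cons _ _),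
    AlternatingMap.map_perm, sign_finRotate, Nat.add_sub_cancel, Units.smul_def,
    wedge_eq_ιMulti, ← Fin.comp_cons]
  simp [← Int.cast_smul_eq_zsmul F]

lemma Pmap_eq_update {N : ℕ} {p : (Fin N → ℕ) × ℕ} (h : ∃ a, p.1 a ≤ p.2) :
    ∃ α, p.1 α ≤ p.2 ∧ (∀ b, α < b → p.2 < p.1 b) ∧
      Pmap p = (Function.update p.1 α p.2, p.1 α) := by
  have hS : (Finset.univ.filter fun a : Fin N => p.1 a ≤ p.2).Nonempty := by
    obtain ⟨a, ha⟩ := h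
    exact ⟨a, by simpa using ha⟩
  refine ⟨_, (Finset.mem_filter.mp (Finset.max'_mem _ hS)).2, fun b hb => ?_,
    by rw [Pmap, dif_pos hS]⟩
  by_contra! hle
  exact (Finset.le_max' _ b (by simpa using hle)).not_gt hb

lemma FDelta_eq_add_of_forall_ne (d : ℕ) {N : ℕ} {p : (Fin N → ℕ) × ℕ}
    (h : ∃ a, p.1 a ≤ p.2) (hne : ∀ a, p.1 a ≠ p.2) :
    ∃ α, p.1 α < p.2 ∧ (∀ b, α < b → p.2 < p.1 b) ∧
      FDelta F d p = Fp F d p.1 p.2 + Fp F d (Function.update p.1 α p.2) (p.1 α) := by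
  obtain ⟨α, hle, hgt, hP⟩ := Pmap_eq_update h
  refine ⟨α, hle.lt_of_ne (hne α), hgt, ?_⟩
  rw [FDelta, if_neg (by simpa using hne), hP]

lemma mu_FDelta_eq_zero (d : ℕ) {N : ℕ} {p : (Fin N → ℕ) × ℕ} (h : ∃ a, p.1 a ≤ p.2) :
    mu F d N (FDelta F d p) = 0 := by
  by_cases hmem : ∃ a, p.1 a = p.2
  · obtain ⟨a, ha⟩ := hmem
    rw [FDelta, if_pos ⟨a, ha⟩, mu_Fp]
    exact AlternatingMap.map_eq_zero_of_eq _ _ (i := a.castSucc) (j := Fin.last N)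
      (by simp [ha]) (Fin.castSucc_lt_last a).ne
  · push Not at hmem
    obtain ⟨α, -, -, hF⟩ := FDelta_eq_add_of_forall_ne F d h hmem
    rw [hF, map_add, mu_Fp, mu_Fp, Fin.snoc_comp_update_eq_comp_swap,
      AlternatingMap.map_swap _ _ (Fin.castSucc_lt_last α).ne]
    exact add_neg_cancel _

def mixedFamily (d N : ℕ) (q : StrictTuple d N × Fin (d + 1)) :
    (⋀[F]^N (Sym' F d)) ⊗[F] (Sym' F d) :=
  if ∀ a, (q.2 : ℕ) < q.1.1 a then Fp F d q.1.1 q.2 else FDelta F d (q.1.1, q.2)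

lemma Fp_mem_span_mixedFamily (d N : ℕ) (j : ℕ) (hj : j ≤ d) (i : StrictTuple d N) :
    Fp F d i.1 j ∈ Submodule.span F (Set.range (mixedFamily F d N)) := by
  induction j using Nat.strong_induction_on generalizing i with
  | _ j ih =>
    have hmem : mixedFamily F d N (i, ⟨j, Nat.lt_succ_of_le hj⟩) ∈
        Submodule.span F (Set.range (mixedFamily F d N)) :=
      Submodule.subset_span (Set.mem_range_self _)
    simp only [mixedFamily] at hmem
    split_ifs at hmem with hanti
    · exact hmem
    push Not at hanti
    by_cases hj' : ∃ a, i.1 a = j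
    · rwa [FDelta, if_pos hj'] at hmem
    push Not at hj'
    obtain ⟨α, hlt, hgt, hF⟩ := FDelta_eq_add_of_forall_ne F d (p := (i.1, j)) hanti hj'
    have hupd : Fp F d (Function.update i.1 α j) (i.1 α) ∈
        Submodule.span F (Set.range (mixedFamily F d N)) := by
      refine ih _ hlt (i.2.2 α) ⟨_, i.2.1.update hlt hgt, fun a => ?_⟩
      rcases eq_or_ne a α with rfl | ha
      · simpa using hj
      · simpa [ha] using i.2.2 a
    rw [hF] at hmem
    exact (Submodule.add_mem_iff_left (Submodule.span F (Set.range (mixedFamily F d N))) hupd).1 hmem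

lemma span_mixedFamily (d N : ℕ) :
    Submodule.span F (Set.range (mixedFamily F d N)) = ⊤ := by
  rw [eq_top_iff, ← (FpBasis F d N).span_eq, Submodule.span_le]
  rintro _ ⟨q, rfl⟩
  rw [FpBasis_apply]
  exact Fp_mem_span_mixedFamily F d N q.2 q.2.is_le q.1

lemma linearIndependent_mixedFamily (d N : ℕ) : LinearIndependent F (mixedFamily F d N) :=
  .of_span_eq_top_of_basis (FpBasis F d N) (span_mixedFamily F d N)

lemma IsSS.exists_le {d N : ℕ} (hN : 0 < N) {p : (Fin N → ℕ) × ℕ} (hp : IsSS d p) :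
    ∃ a, p.1 a ≤ p.2 :=
  ⟨⟨0, hN⟩, hp.2.2.2 _ rfl⟩

def IsSS.toStrictTuple (d N : ℕ) :
    {p : (Fin N → ℕ) × ℕ // IsSS d p} ↪ StrictTuple d N × Fin (d + 1) where
  toFun p := (⟨p.1.1, p.2.1, p.2.2.1⟩, ⟨p.1.2, Nat.lt_succ_of_le p.2.2.2.1⟩)
  inj' p q h := by
    simp only [Prod.mk.injEq, Subtype.mk.injEq, Fin.mk.injEq] at h
    exact Subtype.ext (Prod.ext h.1 h.2)

lemma linearIndependent_FDelta (d N : ℕ) (hN : 0 < N) :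
    LinearIndependent F fun p : {p : (Fin N → ℕ) × ℕ // IsSS d p} => FDelta F d p.1 := by
  convert (linearIndependent_mixedFamily F d N).comp _ (IsSS.toStrictTuple d N).injective using 1
  ext1 p
  obtain ⟨a, ha⟩ := p.2.exists_le hN
  rw [Function.comp_apply, mixedFamily, if_neg (fun h => (h a).not_ge ha)]
  rfl

lemma span_FDelta_le_ker_mu (d N : ℕ) (hN : 0 < N) :
    Submodule.span F (Set.range fun p : {p : (Fin N → ℕ) × ℕ // IsSS d p} => FDelta F d p.1) ≤
      LinearMap.ker (mu F d N) := by
  rw [Submodule.span_le]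
  rintro _ ⟨p, rfl⟩
  exact mu_FDelta_eq_zero F d (p.2.exists_le hN)

abbrev AntiIdx (d N : ℕ) : Type :=
  {q : StrictTuple d N × Fin (d + 1) // ∀ a, (q.2 : ℕ) < q.1.1 a}

def AntiIdx.cons (d N : ℕ) : AntiIdx d N ↪ StrictTuple d (N + 1) where
  toFun q := ⟨Fin.cons q.1.2 q.1.1.1, Fin.strictMono_cons.2 ⟨q.2, q.1.1.2.1⟩,
    Fin.cases q.1.2.is_le q.1.1.2.2⟩
  inj' q r h := by
    have h' : (Fin.cons (q.1.2 : ℕ) q.1.1.1 : Fin (N + 1) → ℕ) = Fin.cons r.1.2 r.1.1.1 :=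
      congrArg Subtype.val h
    obtain ⟨h2, h1⟩ := Fin.cons_inj.1 h'
    exact Subtype.ext (Prod.ext (Subtype.ext h1) (Fin.ext h2))

def spanAnti (d N : ℕ) : Submodule F ((⋀[F]^N (Sym' F d)) ⊗[F] (Sym' F d)) :=
  Submodule.span F (Set.range fun q : AntiIdx d N => Fp F d q.1.1.1 q.1.2)

lemma span_FDelta_sup_spanAnti (d N : ℕ) :
    Submodule.span F (Set.range fun p : {p : (Fin N → ℕ) × ℕ // IsSS d p} => FDelta F d p.1) ⊔
      spanAnti F d N = ⊤ := by
  rw [eq_top_iff, ← span_mixedFamily, Submodule.span_le]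
  rintro _ ⟨q, rfl⟩
  by_cases hanti : ∀ a, (q.2 : ℕ) < q.1.1 a
  · rw [mixedFamily, if_pos hanti]
    exact Submodule.mem_sup_right (Submodule.subset_span ⟨⟨q, hanti⟩, rfl⟩)
  · rw [mixedFamily, if_neg hanti]
    push Not at hanti
    obtain ⟨a, ha⟩ := hanti
    refine Submodule.mem_sup_left (Submodule.subset_span ⟨⟨(q.1.1, q.2), q.1.2.1, q.1.2.2,
      q.2.is_le, fun b hb => ?_⟩, rfl⟩)
    exact (q.1.2.1.monotone (Fin.mk_le_of_le_val (by omega : b.val ≤ a.val))).trans ha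

lemma disjoint_spanAnti_ker_mu (d N : ℕ) :
    Disjoint (spanAnti F d N) (LinearMap.ker (mu F d N)) := by
  apply Submodule.range_ker_disjoint
  convert ((wedgeBasis F d (N + 1)).linearIndependent.comp _ (AntiIdx.cons d N).injective).units_smul
    fun _ => (-1 : Fˣ) ^ N using 1
  ext1 q
  simp [mu_Fp_eq_smul_wedge_cons, AntiIdx.cons, Units.smul_def]
  rfl

/-- Proposition 2.5 of the paper. The vectors `F_Δ(i,j)`, for `(i,j)` ranging
over the semistandard pairs, form a basis of `Δ^{(2,1^{N-1})} Sym^d E = ker μ_N`: they are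
linearly independent and they span the kernel of `μ_N`. -/
theorem statement6 (F : Type*) [Field F] (N d : ℕ) (hN : 0 < N) :
    LinearIndependent F
      (fun p : {p : (Fin N → ℕ) × ℕ // IsSS d p} => FDelta F d p.1) ∧
    Submodule.span F
        (Set.range fun p : {p : (Fin N → ℕ) × ℕ // IsSS d p} => FDelta F d p.1)
      = LinearMap.ker (mu F d N) :=
  ⟨linearIndependent_FDelta F d N hN,
    le_antisymm (span_FDelta_le_ker_mu F d N hN)
      (LinearMap.ker_le_of_sup_eq_top (span_FDelta_le_ker_mu F d N hN)
        (disjoint_spanAnti_ker_mu F d N) (span_FDelta_sup_spanAnti F d N))⟩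

end
end

section
/- For every s ∈ {0,1,…,N−1} and every strictly increasing k ∈ I(d+1,N+1), μ_N(v_{(s,k)}) = 0; consequently the image of φ is contained in Δ^{(2,1^{N−1})}Sym^d E = ker μ_N. -/
open MvPolynomial TensorProduct

set_option maxHeartbeats 1000000
set_option synthInstance.maxHeartbeats 400000

noncomputable section

variable (F : Type*) [Field F]

abbrev Dom (N d : ℕ) : Type _ := (Sym' F (N - 1)) ⊗[F] ↥(⋀[F]^(N + 1) (Sym' F (d + 1)))

/-- The codomain `⋀^N Sym^d E ⊗ Sym^d E` of `φ`. -/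
abbrev Cod (N d : ℕ) : Type _ := ↥(⋀[F]^N (Sym' F d)) ⊗[F] (Sym' F d)

/-! In `μ_N(v_{(s,k)})` the summand indexed by `i ∈ B(k)` is the wedge of the monomials with
exponents `i₁, …, i_N, j`, where `j = s + |k| - N - |i|`. Since `s < N`, `j` lies in
`[k₁, k_{N+1})`, hence in exactly one interval `[k_b, k_{b+1})` of the box. Exchanging `i_b`
and `j` keeps the multi-index in `B(k)` and preserves `|i| + j`, so it is an involution of the
summands that reverses the sign of the wedge, and its fixed points have a repeated factor and
vanish. The claim about `φ` follows since the tensors `X^{N-1-s}Y^s ⊗ F_∧(k)` span its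
domain. -/

section

variable {R M : Type*} [CommRing R] [AddCommGroup M] [Module R M]

lemma ExteriorAlgebra.ιMulti_mul_ι {n : ℕ} (u : Fin n → M) (x : M) :
    ExteriorAlgebra.ιMulti R n u * ExteriorAlgebra.ι R x
      = ExteriorAlgebra.ιMulti R (n + 1) (Fin.snoc u x) := by
  rw [ExteriorAlgebra.ιMulti_apply, ExteriorAlgebra.ιMulti_apply, List.ofFn_succ']
  simp

end

lemma Fin.snoc_update_eq_snoc_comp_swap {α : Type*} {n : ℕ} (i : Fin n → α) (b : Fin n)
    (x : α) :
    (Fin.snoc (Function.update i b x) (i b) : Fin (n + 1) → α)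
      = Fin.snoc i x ∘ Equiv.swap b.castSucc (Fin.last n) := by
  funext a
  induction a using Fin.lastCases with
  | last => simp
  | cast c =>
    rcases eq_or_ne c b with rfl | hc
    · simp
    · rw [Function.comp_apply, Equiv.swap_apply_of_ne_of_ne (by simpa using hc)
        (Fin.castSucc_lt_last c).ne]
      simp [Function.update_of_ne hc]

lemma Fintype.sum_update_add_apply {ι β : Type*} [Fintype ι] [DecidableEq ι] [AddCommMonoid β]
    (i : ι → β) (b : ι) (x : β) :
    ∑ a, Function.update i b x a + i b = ∑ a, i a + x := by
  rw [Finset.sum_update_of_mem (Finset.mem_univ b), Finset.sdiff_singleton_eq_erase,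
    ← Finset.add_sum_erase _ _ (Finset.mem_univ b)]
  abel

theorem TensorProduct.span_image2_tmul_eq_top {R M N : Type*} [CommSemiring R] [AddCommMonoid M]
    [Module R M] [AddCommMonoid N] [Module R N] {s : Set M} {t : Set N}
    (hs : Submodule.span R s = ⊤) (ht : Submodule.span R t = ⊤) :
    Submodule.span R (Set.image2 (· ⊗ₜ[R] ·) s t) = ⊤ := by
  have h := Submodule.map₂_span_span R (TensorProduct.mk R M N) s t
  rw [hs, ht, map₂_mk_top_top_eq_top] at h
  exact h.symm

section Box

variable {N : ℕ} {k : Fin (N + 1) → ℕ}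

lemma exists_mem_Ico_castSucc_succ {t : ℕ}
    (ht : t ∈ Finset.Ico (k 0) (k (Fin.last N))) :
    ∃ b : Fin N, t ∈ Finset.Ico (k b.castSucc) (k b.succ) := by
  rw [Finset.mem_Ico] at ht
  by_contra! h
  have hle : ∀ a, k a ≤ t := fun a => by
    induction a using Fin.induction with
    | zero => exact ht.1
    | succ b ih => simpa [ih] using h b
  exact (hle _).not_gt ht.2

lemma Monotone.eq_of_mem_Ico_castSucc_succ (hk : Monotone k) {t : ℕ} {a b : Fin N}
    (ha : t ∈ Finset.Ico (k a.castSucc) (k a.succ))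
    (hb : t ∈ Finset.Ico (k b.castSucc) (k b.succ)) : a = b := by
  rw [Finset.mem_Ico] at ha hb
  rcases lt_trichotomy a b with h | rfl | h
  · have := hk (Fin.succ_le_castSucc_iff.2 h); omega
  · rfl
  · have := hk (Fin.succ_le_castSucc_iff.2 h); omega

lemma mem_box_iff {i : Fin N → ℕ} :
    i ∈ box k ↔ ∀ a, i a ∈ Finset.Ico (k a.castSucc) (k a.succ) :=
  Fintype.mem_piFinset

lemma update_mem_box {i : Fin N → ℕ} (hi : i ∈ box k) {b : Fin N} {x : ℕ}
    (hx : x ∈ Finset.Ico (k b.castSucc) (k b.succ)) : Function.update i b x ∈ box k := by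
  rw [mem_box_iff] at hi ⊢
  intro a
  rcases eq_or_ne a b with rfl | hab
  · simpa using hx
  · simpa [Function.update_of_ne hab] using hi a

lemma sum_castSucc_le_sum_of_mem_box {i : Fin N → ℕ} (hi : i ∈ box k) :
    ∑ a : Fin N, k a.castSucc ≤ ∑ a, i a :=
  Finset.sum_le_sum fun a _ => (Finset.mem_Ico.1 (mem_box_iff.1 hi a)).1

lemma sum_add_le_sum_succ_of_mem_box {i : Fin N → ℕ} (hi : i ∈ box k) :
    ∑ a, i a + N ≤ ∑ a : Fin N, k a.succ := by
  simpa [Finset.sum_add_distrib] using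
    Finset.sum_le_sum (s := Finset.univ) fun a _ =>
      Nat.succ_le_of_lt (Finset.mem_Ico.1 (mem_box_iff.1 hi a)).2

lemma sub_sum_mem_Ico_of_mem_box {s : ℕ} (hs : s < N) {i : Fin N → ℕ} (hi : i ∈ box k) :
    s + ∑ a, k a - N - ∑ a, i a ∈ Finset.Ico (k 0) (k (Fin.last N)) := by
  have := sum_castSucc_le_sum_of_mem_box hi
  have := sum_add_le_sum_succ_of_mem_box hi
  have := Fin.sum_univ_succ k
  have := Fin.sum_univ_castSucc k
  rw [Finset.mem_Ico]
  omega

theorem sum_box_alternatingMap_snoc_eq_zero {R M P : Type*} [Semiring R] [AddCommMonoid M]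
    [Module R M] [AddCommGroup P] [Module R P] (A : M [⋀^Fin (N + 1)]→ₗ[R] P) (v : ℕ → M)
    (hk : Monotone k) {s : ℕ} (hs : s < N) :
    ∑ i ∈ box k, A (v ∘ Fin.snoc i (s + ∑ a, k a - N - ∑ a, i a)) = 0 := by
  classical
  set C := s + ∑ a, k a - N
  choose b hb using fun i (hi : i ∈ box k) =>
    exists_mem_Ico_castSucc_succ (sub_sum_mem_Ico_of_mem_box hs hi)
  let σ i (hi : i ∈ box k) := Function.update i (b i hi) (C - ∑ a, i a)
  have hσ_mem i hi : σ i hi ∈ box k := update_mem_box hi (hb i hi)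
  have hσ_free i hi : C - ∑ a, σ i hi a = i (b i hi) := by
    simp only [σ]
    have := Fintype.sum_update_add_apply i (b i hi) (C - ∑ a, i a)
    have := sum_add_le_sum_succ_of_mem_box hi
    have := Fin.sum_univ_succ k
    omega
  have hσ_b i hi : b (σ i hi) (hσ_mem i hi) = b i hi :=
    hk.eq_of_mem_Ico_castSucc_succ (hσ_free i hi ▸ hb _ (hσ_mem i hi))
      (mem_box_iff.1 hi (b i hi))
  refine Finset.sum_involution σ (fun i hi => ?_) (fun i hi hne hfix => hne ?_) hσ_mem
    (fun i hi => ?_)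
  · rw [hσ_free, Fin.snoc_update_eq_snoc_comp_swap, ← Function.comp_assoc,
      A.map_swap _ (Fin.castSucc_lt_last _).ne, add_neg_cancel]
  · have hfree : C - ∑ a, i a = i (b i hi) := by
      simpa [σ] using congrFun hfix (b i hi)
    refine A.map_eq_zero_of_eq _ (i := (b i hi).castSucc) (j := Fin.last N) ?_
      (Fin.castSucc_lt_last _).ne
    simp [hfree]
  · simp only [σ, hσ_b, hσ_free]
    simp

end Box

lemma coe_mu_Fp (d : ℕ) {N : ℕ} (i : Fin N → ℕ) (j : ℕ) :
    (mu F d N (Fp F d i j) : ExteriorAlgebra F (Sym' F d))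
      = ExteriorAlgebra.ιMulti F (N + 1) (XY F d ∘ Fin.snoc i j) := by
  rw [Fin.comp_snoc, ← ExteriorAlgebra.ιMulti_mul_ι]
  rfl

theorem mu_vv_eq_zero (d : ℕ) {N s : ℕ} (hs : s < N) {k : Fin (N + 1) → ℕ}
    (hk : Monotone k) :
    mu F d N (vv F d N s k) = 0 := by
  rw [← ZeroMemClass.coe_eq_zero, vv, map_sum, Submodule.coe_sum]
  simp_rw [coe_mu_Fp]
  exact sum_box_alternatingMap_snoc_eq_zero _ _ hk hs

lemma coe_XY_s8 {c i : ℕ} (h : i ≤ c) :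
    (XY F c i : MvPolynomial (Fin 2) F) = X 0 ^ (c - i) * X 1 ^ i := by
  rw [XY, dif_pos h]

theorem span_range_XY (c : ℕ) :
    Submodule.span F (Set.range fun t : Fin (c + 1) => XY F c t) = ⊤ := by
  refine Submodule.map_injective_of_injective (Submodule.injective_subtype _) ?_
  rw [Submodule.map_span, Submodule.map_top, Submodule.range_subtype]
  refine le_antisymm (Submodule.span_le.2 ?_) fun p hp => ?_
  · rintro _ ⟨_, ⟨t, rfl⟩, rfl⟩
    exact (XY F c t).2
  rw [p.as_sum]
  refine Submodule.sum_mem _ fun m hm => ?_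
  have hdeg : m 0 + m 1 = c := by
    by_contra h
    refine mem_support_iff.1 hm (hp.coeff_eq_zero ?_)
    rwa [Finsupp.degree_eq_sum, Fin.sum_univ_two]
  have hmono : monomial m (coeff m p) = coeff m p • (XY F c (m 1) : MvPolynomial (Fin 2) F) := by
    rw [coe_XY_s8 F (by omega), show c - m 1 = m 0 by omega, smul_eq_C_mul, monomial_eq,
      Finsupp.prod_fintype _ _ (by simp), Fin.prod_univ_two]
  rw [hmono]
  exact Submodule.smul_mem _ _ (Submodule.subset_span ⟨_, ⟨⟨m 1, by omega⟩, rfl⟩, rfl⟩)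

theorem span_wedge (c r : ℕ) :
    Submodule.span F (wedge F c '' {k : Fin r → ℕ | StrictMono k ∧ ∀ a, k a ≤ c})
      = ⊤ := by
  refine top_le_iff.1 <| (exteriorPower.ιMulti_family_span_of_span F (span_range_XY F c)).ge.trans
    (Submodule.span_mono ?_)
  rintro _ ⟨S, rfl⟩
  let f := Set.powersetCard.ofFinEmbEquiv.symm S
  exact ⟨fun a => f a, ⟨fun a b hab => f.strictMono hab, fun a => Nat.lt_succ_iff.1 (f a).2⟩,
    rfl⟩

/-- Lemma 2.6 of the paper. For every `s ∈ {0,…,N-1}` and strictly increasing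
`k ∈ I(d+1, N+1)` we have `μ_N(v_{(s,k)}) = 0`; consequently the image of `φ` is contained in
`Δ^{(2,1^{N-1})} Sym^d E = ker μ_N`. -/
theorem statement8 (F : Type*) [Field F] (N d : ℕ) (hN : 0 < N) :
    (∀ s < N, ∀ k : Fin (N + 1) → ℕ, StrictMono k → (∀ a, k a ≤ d + 1) →
      mu F d N (vv F d N s k) = 0) ∧
    ∀ φ : Dom F N d →ₗ[F] Cod F N d,
      (∀ s < N, ∀ k : Fin (N + 1) → ℕ, StrictMono k → (∀ a, k a ≤ d + 1) →
        φ (XY F (N - 1) s ⊗ₜ[F] wedge F (d + 1) k) = vv F d N s k) →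
      LinearMap.range φ ≤ LinearMap.ker (mu F d N) := by
  refine ⟨fun s hs k hk _ => mu_vv_eq_zero F d hs hk.monotone, fun φ hφ => ?_⟩
  rw [LinearMap.range_le_ker_iff]
  refine LinearMap.ext_on (TensorProduct.span_image2_tmul_eq_top (span_range_XY F (N - 1))
    (span_wedge F (d + 1) (N + 1))) ?_
  rintro _ ⟨_, ⟨t, rfl⟩, _, ⟨k, ⟨hk, hkd⟩, rfl⟩, rfl⟩
  have ht : (t : ℕ) < N := by omega
  rw [LinearMap.comp_apply, hφ t ht k hk hkd, mu_vv_eq_zero F d ht hk.monotone,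
    LinearMap.zero_apply]

end
end

section
/- Let k ∈ I(d+1,N+1) be strictly increasing and let t be an integer with |k|−N−1 ≤ t ≤ |k|−2. Then Σ_{α=1}^{N+1} k_α · Σ_{i ∈ B(k−u^{(α)})} F(i, t−|i|) = Σ_{β=1}^{N} Σ_{j ∈ B(k)−u^{(β)}} (j_β+1) · F(j, t−|j|) + Σ_{j ∈ B(k)} (|k|−N−|j|) · F(j, t−|j|), where B(k)−u^{(β)} = { j−u^{(β)} : j ∈ B(k) }. -/
open MvPolynomial TensorProduct

set_option maxHeartbeats 1000000
set_option synthInstance.maxHeartbeats 400000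

noncomputable section

variable (F : Type*) [Field F]

/-- The monomial `X^{c-i}Y^i` for an integer index `i`, with the convention that it is `0`
whenever `i` lies outside `{0,…,c}`. -/
def ZXY (c : ℕ) (i : ℤ) : Sym' F c := if 0 ≤ i then XY F c i.toNat else 0

/-- `F_∧^{(c)}(k)` for an integer multi-index, with out-of-range factors set to `0`. -/
def Zwedge (c : ℕ) {r : ℕ} (k : Fin r → ℤ) : ↥(⋀[F]^r (Sym' F c)) :=
  ⟨ExteriorAlgebra.ιMulti F r fun a => ZXY F c (k a),
    ExteriorAlgebra.ιMulti_range F r (Set.mem_range_self _)⟩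

/-- `F(i,j)` for integer indices: it is `F_∧^{(d)}(i) ⊗ X^{d-j}Y^j` when all entries of `i` and
`j` lie in `{0,…,d}`, and `0` otherwise. -/
def ZFp (d : ℕ) {N : ℕ} (i : Fin N → ℤ) (j : ℤ) :
    (⋀[F]^N (Sym' F d)) ⊗[F] (Sym' F d) :=
  Zwedge F d i ⊗ₜ[F] ZXY F d j

/-- The box `B(m) = [m₁,m₂) × ⋯ × [m_N, m_{N+1})` for an integer tuple `m`. -/
def Zbox {N : ℕ} (m : Fin (N + 1) → ℤ) : Finset (Fin N → ℤ) :=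
  Fintype.piFinset fun a : Fin N => Finset.Ico (m a.castSucc) (m a.succ)

/-!
Both sides are integer combinations of the vectors `F(j, t - |j|)` with `j` in the box
`∏ₐ [k_a - 1, k_{a+1})`, so it suffices to compare coefficients, and since the wedge is
alternating only injective `j` matter. If `j ∈ B(k)`, then `j` lies in `B(k - u^{(1)})`, and
it lies in `B(k - u^{(β+1)})` exactly when it lies in `B(k) - u^{(β)}`, namely when
`j_β + 1 < k_{β+1}`; in the remaining case `k_{β+1} = j_β + 1`, so the difference of the
coefficients is `Σ_β (k_{β+1} - 1 - j_β) = |k| - k_1 - N - |j|`. Otherwise some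
`j_γ = k_γ - 1`; then only `α = γ` and `β = γ` can contribute, both exactly when the other
entries of `j` lie in `B(k)`, with coefficients `k_γ = j_γ + 1`.
-/
lemma ZFp_eq_zero_of_not_injective {d N : ℕ} {i : Fin N → ℤ} (hi : ¬ Function.Injective i)
    (j : ℤ) : ZFp F d i j = 0 := by
  obtain ⟨a, a', heq, hne⟩ : ∃ a a', i a = i a' ∧ a ≠ a' := by
    simpa [Function.Injective] using hi
  have hwedge : Zwedge F d i = 0 :=
    Subtype.ext ((ExteriorAlgebra.ιMulti F N).map_eq_zero_of_eq _ (by simp [heq]) hne)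
  rw [ZFp, hwedge, TensorProduct.zero_tmul]

lemma Finset.sum_smul_eq_sum_ite_smul_of_subset {ι R M : Type*} [DecidableEq ι] [Semiring R]
    [AddCommMonoid M] [Module R M] {s S : Finset ι} (h : s ⊆ S) (c : ι → R) (G : ι → M) :
    ∑ j ∈ s, c j • G j = ∑ j ∈ S, (if j ∈ s then c j else 0) • G j := by
  simp_rw [ite_smul, zero_smul]
  rw [Finset.sum_ite_mem, Finset.inter_eq_right.mpr h]

lemma Finset.mem_image_sub_right_iff {G : Type*} [AddGroup G] [DecidableEq G] {s : Finset G}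
    {u j : G} : j ∈ s.image (· - u) ↔ j + u ∈ s := by
  rw [Finset.mem_image]
  exact ⟨by rintro ⟨i, hi, rfl⟩; simpa using hi, fun h => ⟨j + u, h, add_sub_cancel_right j u⟩⟩

section Zbox

variable {N : ℕ} {k : Fin (N + 1) → ℤ} {j : Fin N → ℤ}

@[simp]
lemma mem_Zbox {m : Fin (N + 1) → ℤ} :
    j ∈ Zbox m ↔ ∀ a, m a.castSucc ≤ j a ∧ j a < m a.succ := by
  simp [Zbox]

lemma coeff_identity_of_mem_Zbox (hj : j ∈ Zbox k) :
    ∑ α, (if j ∈ Zbox (k - Pi.single α 1) then k α else 0)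
      = ∑ β, (if j + Pi.single β 1 ∈ Zbox k then j β + 1 else 0)
        + (∑ a, k a - N - ∑ a, j a) := by
  rw [mem_Zbox] at hj
  have h0 : j ∈ Zbox (k - Pi.single 0 1) := by
    simp only [mem_Zbox, Pi.sub_apply, Pi.single_apply, Fin.succ_ne_zero, if_false]
    intro a; have := hj a; split_ifs <;> omega
  have hsucc : ∀ β, j ∈ Zbox (k - Pi.single β.succ 1) ↔ j β + 1 < k β.succ := by
    intro β
    simp only [mem_Zbox, Pi.sub_apply, Pi.single_apply, Fin.succ_inj]
    refine ⟨fun h => by simpa [sub_eq_add_neg, lt_add_neg_iff_add_lt] using (h β).2,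
      fun hlt a => ?_⟩
    have := hj a
    obtain rfl | hne := eq_or_ne a β
    · rw [if_pos rfl]; split_ifs <;> omega
    · rw [if_neg hne]; split_ifs <;> omega
  have hshift : ∀ β, j + Pi.single β 1 ∈ Zbox k ↔ j β + 1 < k β.succ := by
    intro β
    simp only [mem_Zbox, Pi.add_apply, Pi.single_apply]
    refine ⟨fun h => by simpa using (h β).2, fun hlt a => ?_⟩
    have := hj a
    split_ifs with h
    · subst h; omega
    · omega
  have hterm : ∀ β, (if j β + 1 < k β.succ then k β.succ else 0)
      = (if j β + 1 < k β.succ then j β + 1 else 0) + (k β.succ - 1 - j β) := by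
    intro β; have := hj β; split_ifs <;> omega
  simp_rw [Fin.sum_univ_succ (f := fun α => if j ∈ Zbox (k - Pi.single α 1) then k α else 0),
    if_pos h0, hsucc, hshift, hterm, Finset.sum_add_distrib, Fin.sum_univ_succ (f := k),
    Finset.sum_sub_distrib]
  simp only [Finset.sum_const, Finset.card_univ, Fintype.card_fin, Int.nsmul_eq_mul, mul_one]
  ring

lemma eq_castSucc_of_mem_Zbox_sub_single {γ : Fin N} (hγ : j γ < k γ.castSucc) {α : Fin (N + 1)}
    (h : j ∈ Zbox (k - Pi.single α 1)) : α = γ.castSucc := by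
  by_contra hne
  have := (mem_Zbox.1 h γ).1
  simp [Ne.symm hne] at this
  omega

lemma eq_of_add_single_mem_Zbox {γ : Fin N} (hγ : j γ < k γ.castSucc) {β : Fin N}
    (h : j + Pi.single β 1 ∈ Zbox k) : β = γ := by
  by_contra hne
  have := (mem_Zbox.1 h γ).1
  simp [Ne.symm hne] at this
  omega

lemma mem_Zbox_sub_single_castSucc_iff (hinj : Function.Injective j)
    (hS : ∀ a, k a.castSucc - 1 ≤ j a ∧ j a < k a.succ) {γ : Fin N} (hγ : j γ < k γ.castSucc) :
    j ∈ Zbox (k - Pi.single γ.castSucc 1) ↔ ∀ a ≠ γ, k a.castSucc ≤ j a := by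
  simp only [mem_Zbox, Pi.sub_apply, Pi.single_apply, Fin.castSucc_inj]
  refine ⟨fun h a ha => by simpa [ha] using (h a).1, fun h a => ⟨?_, ?_⟩⟩
  · have := (hS a).1
    split_ifs with ha
    · omega
    · simpa using h a ha
  · split_ifs with ha
    · have hne : a ≠ γ := by rintro rfl; exact Fin.castSucc_lt_succ.ne' ha
      have hka : k a.succ = k γ.castSucc := congrArg k ha
      have := hinj.ne hne
      have := (hS a).2
      have := (hS γ).1
      omega
    · simpa using (hS a).2

lemma add_single_mem_Zbox_iff (hk : StrictMono k)
    (hS : ∀ a, k a.castSucc - 1 ≤ j a ∧ j a < k a.succ) {γ : Fin N} (hγ : j γ < k γ.castSucc) :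
    j + Pi.single γ 1 ∈ Zbox k ↔ ∀ a ≠ γ, k a.castSucc ≤ j a := by
  simp only [mem_Zbox, Pi.add_apply, Pi.single_apply]
  refine ⟨fun h a ha => by simpa [ha] using (h a).1, fun h a => ?_⟩
  obtain rfl | ha := eq_or_ne a γ
  · have := hk (Fin.castSucc_lt_succ (i := a))
    have := (hS a).1
    simp only [if_true]; omega
  · simpa [ha] using ⟨h a ha, (hS a).2⟩

lemma coeff_identity_of_lt_castSucc (hk : StrictMono k) (hinj : Function.Injective j)
    (hS : ∀ a, k a.castSucc - 1 ≤ j a ∧ j a < k a.succ) {γ : Fin N} (hγ : j γ < k γ.castSucc) :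
    ∑ α, (if j ∈ Zbox (k - Pi.single α 1) then k α else 0)
      = ∑ β, (if j + Pi.single β 1 ∈ Zbox k then j β + 1 else 0) := by
  have hjγ : j γ + 1 = k γ.castSucc := by have := (hS γ).1; omega
  rw [Finset.sum_eq_single_of_mem γ.castSucc (Finset.mem_univ _)
      fun α _ hα => if_neg (mt (eq_castSucc_of_mem_Zbox_sub_single hγ) hα),
    Finset.sum_eq_single_of_mem γ (Finset.mem_univ _)
      fun β _ hβ => if_neg (mt (eq_of_add_single_mem_Zbox hγ) hβ)]
  simp only [mem_Zbox_sub_single_castSucc_iff hinj hS hγ, add_single_mem_Zbox_iff hk hS hγ, hjγ]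

lemma coeff_identity (hk : StrictMono k) (hinj : Function.Injective j)
    (hS : ∀ a, k a.castSucc - 1 ≤ j a ∧ j a < k a.succ) :
    ∑ α, (if j ∈ Zbox (k - Pi.single α 1) then k α else 0)
      = ∑ β, (if j + Pi.single β 1 ∈ Zbox k then j β + 1 else 0)
        + if j ∈ Zbox k then ∑ a, k a - N - ∑ a, j a else 0 := by
  split_ifs with hj
  · exact coeff_identity_of_mem_Zbox hj
  · obtain ⟨γ, hγ⟩ : ∃ γ, j γ < k γ.castSucc := by
      simp only [mem_Zbox, not_forall] at hj
      obtain ⟨γ, hγ⟩ := hj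
      exact ⟨γ, by have := hS γ; omega⟩
    rw [add_zero]
    exact coeff_identity_of_lt_castSucc hk hinj hS hγ

theorem sum_smul_sum_Zbox_sub_single {M : Type*} [AddCommGroup M] (hk : StrictMono k)
    (G : (Fin N → ℤ) → M) (hG : ∀ j, ¬ Function.Injective j → G j = 0) :
    ∑ α, k α • ∑ i ∈ Zbox (k - Pi.single α 1), G i
      = ∑ β, ∑ j ∈ (Zbox k).image (· - Pi.single β 1), (j β + 1) • G j
        + ∑ j ∈ Zbox k, (∑ a, k a - N - ∑ a, j a) • G j := by
  classical
  set S := Fintype.piFinset fun a : Fin N => Finset.Ico (k a.castSucc - 1) (k a.succ)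
  have hmemS : ∀ {j}, j ∈ S ↔ ∀ a, k a.castSucc - 1 ≤ j a ∧ j a < k a.succ := by simp [S]
  have hsub_sub : ∀ α, Zbox (k - Pi.single α 1) ⊆ S := fun α j hj => hmemS.2 fun a => by
    have := mem_Zbox.1 hj a
    simp only [Pi.sub_apply, Pi.single_apply] at this
    split_ifs at this <;> omega
  have hsub_image : ∀ β, (Zbox k).image (· - Pi.single β 1) ⊆ S :=
    fun β j hj => hmemS.2 fun a => by
      have := mem_Zbox.1 (Finset.mem_image_sub_right_iff.1 hj) a
      simp only [Pi.add_apply, Pi.single_apply] at this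
      split_ifs at this <;> omega
  have hsub : Zbox k ⊆ S := fun j hj => hmemS.2 fun a => by
    have := mem_Zbox.1 hj a
    omega
  simp_rw [Finset.smul_sum, Finset.sum_smul_eq_sum_ite_smul_of_subset (hsub_sub _),
    Finset.sum_smul_eq_sum_ite_smul_of_subset (hsub_image _),
    Finset.sum_smul_eq_sum_ite_smul_of_subset hsub]
  rw [Finset.sum_comm (s := (Finset.univ : Finset (Fin (N + 1)))),
    Finset.sum_comm (s := (Finset.univ : Finset (Fin N))), ← Finset.sum_add_distrib]
  refine Finset.sum_congr rfl fun j hj => ?_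
  by_cases hinj : Function.Injective j
  · simp only [← Finset.sum_smul, ← add_smul, Finset.mem_image_sub_right_iff,
      coeff_identity hk hinj (hmemS.1 hj)]
  · simp [hG j hinj]

end Zbox

theorem statement9_general (F : Type*) [Field F] (N d : ℕ)
    (k : Fin (N + 1) → ℕ) (hk : StrictMono k) (t : ℤ) :
    ∑ α : Fin (N + 1), (k α : F) •
        ∑ i ∈ Zbox (fun b => (k b : ℤ) - if b = α then 1 else 0),
          ZFp F d i (t - ∑ a, i a)
    = (∑ β : Fin N,
        ∑ j ∈ (Zbox fun b => (k b : ℤ)).image (fun j a => j a - if a = β then 1 else 0),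
          ((j β + 1 : ℤ) : F) • ZFp F d j (t - ∑ a, j a))
      + ∑ j ∈ Zbox (fun b => (k b : ℤ)),
          (((∑ a, (k a : ℤ)) - N - (∑ a, j a) : ℤ) : F) • ZFp F d j (t - ∑ a, j a) := by
  have hsub_single {n : ℕ} (m : Fin n → ℤ) (α : Fin n) :
      m - Pi.single α 1 = fun b => m b - if b = α then 1 else 0 := by
    ext b; simp [Pi.single_apply]
  have key := sum_smul_sum_Zbox_sub_single (k := fun b => (k b : ℤ))
    (Nat.strictMono_cast.comp hk) (fun j => ZFp F d j (t - ∑ a, j a))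
    fun j hj => ZFp_eq_zero_of_not_injective F hj _
  simp only [← Int.cast_smul_eq_zsmul F, Int.cast_natCast, hsub_single] at key
  exact key

/-- Lemma 2.8 of the paper, the technical lemma. For strictly increasing
`k ∈ I(d+1,N+1)` and any integer `t` with `|k|-N-1 ≤ t ≤ |k|-2`,
`Σ_{α=1}^{N+1} k_α Σ_{i ∈ B(k-u^{(α)})} F(i, t-|i|)
  = Σ_{β=1}^{N} Σ_{j ∈ B(k)-u^{(β)}} (j_β+1) F(j, t-|j|)
    + Σ_{j ∈ B(k)} (|k|-N-|j|) F(j, t-|j|)`. -/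
theorem statement9 (F : Type*) [Field F] (N d : ℕ) (hN : 0 < N)
    (k : Fin (N + 1) → ℕ) (hk : StrictMono k) (hk' : ∀ a, k a ≤ d + 1)
    (t : ℤ) (ht1 : (∑ a, (k a : ℤ)) - N - 1 ≤ t) (ht2 : t ≤ (∑ a, (k a : ℤ)) - 2) :
    ∑ α : Fin (N + 1), (k α : F) •
        ∑ i ∈ Zbox (fun b => (k b : ℤ) - if b = α then 1 else 0),
          ZFp F d i (t - ∑ a, i a)
    = (∑ β : Fin N,
        ∑ j ∈ (Zbox fun b => (k b : ℤ)).image (fun j a => j a - if a = β then 1 else 0),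
          ((j β + 1 : ℤ) : F) • ZFp F d j (t - ∑ a, j a))
      + ∑ j ∈ Zbox (fun b => (k b : ℤ)),
          (((∑ a, (k a : ℤ)) - N - (∑ a, j a) : ℤ) : F) • ZFp F d j (t - ∑ a, j a) :=
  statement9_general F N d k hk t

end
end

section
/- Let (i,j) ∈ I(d,N) × {0,1,…,d} be a semistandard pair with j ∉ {i_1,…,i_N}, let s ∈ {0,1,…,N−1} and let k ∈ I(d+1,N+1) be strictly increasing. Suppose F(i,j) has a nonzero coefficient in the expression of v_{(s,k)} in the canonical basis of ⋀^N Sym^d E ⊗ Sym^d E, and suppose that for some m ≥ 1 the m-th iterate (i′,j′) = P^m(i,j) is defined and F(i′,j′) also has a nonzero coefficient in v_{(s,k)}. Then m = 1. -/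
open MvPolynomial TensorProduct

set_option maxHeartbeats 1000000
set_option synthInstance.maxHeartbeats 400000

noncomputable section

variable (F : Type*) [Field F]

/-!
The coefficient of `F(q)` in the canonical basis is read off by a dual functional built from
`exteriorPower.pairingDual`. As `v_{(s,k)}` is a sum of basis vectors `F(i, ·)` with `i ∈ B(k)`,
both `i` and the first component of `P^m(i,j)` lie in `B(k)`.

Let `α` be the position moved by the first step of `P`. Semistandardness of `P(i,j)` forces
`α ≠ 1`, and the second step moves `i_α` to position `α - 1`. Every later step moves an entry
smaller than `i_{α-1}`, hence acts strictly to the left of `α - 1`. So for `m ≥ 2` the entry of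
`P^m(i,j)` at position `α - 1` is `i_α ≥ k_α`, which `B(k)` forbids.
-/

namespace Statement14

def coeffXY (d j : ℕ) : Module.Dual F (Sym' F d) :=
  MvPolynomial.lcoeff F (Finsupp.single 0 (d - j) + Finsupp.single 1 j) ∘ₗ Submodule.subtype _

lemma coeffXY_XY_self {d j : ℕ} (hj : j ≤ d) : coeffXY F d j (XY F d j) = 1 := by
  simp [coeffXY, XY, hj, X_pow_eq_monomial, monomial_mul, coeff_monomial]

lemma coeffXY_XY_of_ne (d : ℕ) {i j : ℕ} (hij : i ≠ j) : coeffXY F d i (XY F d j) = 0 := by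
  unfold XY
  split_ifs
  · simp only [coeffXY, LinearMap.comp_apply, Submodule.coe_subtype, lcoeff_apply,
      X_pow_eq_monomial, monomial_mul, one_mul, coeff_monomial, ite_eq_right_iff]
    intro h
    exact absurd (by simpa using DFunLike.congr_fun h 1) (Ne.symm hij)
  · simp

lemma wedge_eq_ιMulti (d : ℕ) {N : ℕ} (p : Fin N → ℕ) :
    wedge F d p = exteriorPower.ιMulti F N fun a => XY F d (p a) := rfl

def wedgeCoord (d : ℕ) {N : ℕ} (q : Fin N → ℕ) : Module.Dual F (⋀[F]^N (Sym' F d)) :=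
  exteriorPower.pairingDual F (Sym' F d) N (exteriorPower.ιMulti F N fun a => coeffXY F d (q a))

lemma wedgeCoord_wedge_self {d N : ℕ} {q : Fin N → ℕ} (hq : StrictMono q)
    (hqd : ∀ a, q a ≤ d) :
    wedgeCoord F d q (wedge F d q) = 1 := by
  rw [wedgeCoord, wedge_eq_ιMulti, exteriorPower.pairingDual_ιMulti_ιMulti,
    ← Matrix.det_one (n := Fin N)]
  congr 1
  ext a b
  obtain rfl | hab := eq_or_ne a b
  · simp [coeffXY_XY_self F (hqd a)]
  · simp [Matrix.one_apply_ne hab, coeffXY_XY_of_ne F d (hq.injective.ne hab.symm)]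

lemma wedgeCoord_wedge_of_ne {d N : ℕ} {p q : Fin N → ℕ} (hp : StrictMono p) (hq : StrictMono q)
    (hpq : p ≠ q) : wedgeCoord F d q (wedge F d p) = 0 :=
  exteriorPower.pairingDual_apply_apply_eq_one_zero (XY F d) (coeffXY F d)
    (fun _ _ => coeffXY_XY_of_ne F d) N (OrderEmbedding.ofStrictMono q hq)
    (OrderEmbedding.ofStrictMono p hp) fun h => hpq (congrArg DFunLike.coe h).symm

def coord (d : ℕ) {N : ℕ} (q : (Fin N → ℕ) × ℕ) :
    Module.Dual F ((⋀[F]^N (Sym' F d)) ⊗[F] (Sym' F d)) :=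
  dualDistrib F _ _ (wedgeCoord F d q.1 ⊗ₜ coeffXY F d q.2)

lemma coord_Fp {d N : ℕ} {p q : (Fin N → ℕ) × ℕ} (hp : StrictMono p.1) (hq : StrictMono q.1)
    (hqd : ∀ a, q.1 a ≤ d) (hq₂ : q.2 ≤ d) :
    coord F d q (Fp F d p.1 p.2) = if p = q then 1 else 0 := by
  rw [coord, Fp, dualDistrib_apply]
  split_ifs with hpq
  · subst hpq
    rw [wedgeCoord_wedge_self F hq hqd, coeffXY_XY_self F hq₂, mul_one]
  · rcases ne_or_eq p.1 q.1 with h₁ | h₁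
    · rw [wedgeCoord_wedge_of_ne F hp hq h₁, zero_mul]
    · have h₂ : q.2 ≠ p.2 := fun h₂ => hpq (Prod.ext h₁ h₂.symm)
      rw [coeffXY_XY_of_ne F d h₂, mul_zero]

lemma coord_finsuppSum {d N : ℕ} {c : ((Fin N → ℕ) × ℕ) →₀ F}
    (hc : ∀ p ∈ c.support, StrictMono p.1) {q : (Fin N → ℕ) × ℕ} (hq : StrictMono q.1)
    (hqd : ∀ a, q.1 a ≤ d) (hq₂ : q.2 ≤ d) :
    coord F d q (c.sum fun p r => r • Fp F d p.1 p.2) = c q := by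
  rw [map_finsuppSum]
  calc (c.sum fun p r => coord F d q (r • Fp F d p.1 p.2))
      = c.sum fun p r => if p = q then r else 0 :=
        Finsupp.sum_congr fun p hp => by
          rw [map_smul, coord_Fp F (hc p hp) hq hqd hq₂, smul_eq_mul, mul_ite, mul_one, mul_zero]
    _ = c q := Finsupp.sum_ite_self_eq' c q

lemma mem_box_iff {N : ℕ} {k : Fin (N + 1) → ℕ} {i : Fin N → ℕ} :
    i ∈ box k ↔ ∀ a, k a.castSucc ≤ i a ∧ i a < k a.succ := by
  simp [box, Fintype.mem_piFinset]

lemma strictMono_of_mem_box {N : ℕ} {k : Fin (N + 1) → ℕ} {i : Fin N → ℕ} (hi : i ∈ box k) :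
    StrictMono i := by
  rw [mem_box_iff] at hi
  cases N with
  | zero => exact Subsingleton.strictMono i
  | succ n =>
    refine Fin.strictMono_iff_lt_succ.2 fun a => ?_
    have h := (hi a.succ).1
    rw [← Fin.succ_castSucc] at h
    exact (hi a.castSucc).2.trans_le h

lemma coord_vv_of_notMem_box {d N s : ℕ} {k : Fin (N + 1) → ℕ} {q : (Fin N → ℕ) × ℕ}
    (hq : StrictMono q.1) (hqk : q.1 ∉ box k) : coord F d q (vv F d N s k) = 0 := by
  rw [vv, map_sum]
  refine Finset.sum_eq_zero fun i hi => ?_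
  rw [coord, Fp, dualDistrib_apply,
    wedgeCoord_wedge_of_ne F (strictMono_of_mem_box hi) hq (ne_of_mem_of_not_mem hi hqk),
    zero_mul]

lemma fst_mem_box_of_coeff_ne_zero {d N s : ℕ} {k : Fin (N + 1) → ℕ}
    {c : ((Fin N → ℕ) × ℕ) →₀ F}
    (hc : ∀ p ∈ c.support, StrictMono p.1 ∧ (∀ a, p.1 a ≤ d) ∧ p.2 ≤ d)
    (hsum : (c.sum fun p r => r • Fp F d p.1 p.2) = vv F d N s k)
    {q : (Fin N → ℕ) × ℕ} (hcq : c q ≠ 0) : q.1 ∈ box k := by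
  obtain ⟨hq, hqd, hq₂⟩ := hc q (Finsupp.mem_support_iff.2 hcq)
  by_contra hqk
  apply hcq
  rw [← coord_finsuppSum F (fun p hp => (hc p hp).1) hq hqd hq₂, hsum,
    coord_vv_of_notMem_box F hq hqk]

section Neighbour

variable {N : ℕ}

lemma Pmap_eq_update {p : (Fin N → ℕ) × ℕ} {α : Fin N} (hα : p.1 α ≤ p.2)
    (hmax : ∀ a, p.1 a ≤ p.2 → a ≤ α) : Pmap p = (Function.update p.1 α p.2, p.1 α) := by
  have hne : (Finset.univ.filter fun a => p.1 a ≤ p.2).Nonempty := ⟨α, by simpa using hα⟩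
  have hmax' : (Finset.univ.filter fun a => p.1 a ≤ p.2).max' hne = α :=
    le_antisymm (Finset.max'_le _ _ _ fun a ha => hmax a (by simpa using ha))
      (Finset.le_max' _ _ (by simpa using hα))
  simp only [Pmap, dif_pos hne, hmax']

lemma Pmap_snd_le (p : (Fin N → ℕ) × ℕ) : (Pmap p).2 ≤ p.2 := by
  unfold Pmap
  split_ifs with hne
  · simpa using ((Finset.univ.filter fun a => p.1 a ≤ p.2).max'_mem hne)
  · exact le_rfl

lemma Pmap_fst_of_lt {p : (Fin N → ℕ) × ℕ} {β : Fin N} (h : ∀ a, β ≤ a → p.2 < p.1 a)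
    {a : Fin N} (ha : β ≤ a) : (Pmap p).1 a = p.1 a := by
  unfold Pmap
  split_ifs with hne
  · have hmem := (Finset.univ.filter fun a => p.1 a ≤ p.2).max'_mem hne
    refine Function.update_of_ne (fun hα => ?_) _ _
    rw [Finset.mem_filter, ← hα] at hmem
    exact (h a ha).not_ge hmem.2
  · rfl

lemma iterate_Pmap_fst_of_lt {p : (Fin N → ℕ) × ℕ} {β : Fin N} (h : ∀ a, β ≤ a → p.2 < p.1 a)
    (l : ℕ) {a : Fin N} (ha : β ≤ a) : (Pmap^[l] p).1 a = p.1 a := by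
  induction l generalizing p with
  | zero => rfl
  | succ l ih =>
    have h' : ∀ a, β ≤ a → (Pmap p).2 < (Pmap p).1 a := fun b hb => by
      rw [Pmap_fst_of_lt h hb]
      exact (Pmap_snd_le p).trans_lt (h b hb)
    rw [Function.iterate_succ_apply, ih h', Pmap_fst_of_lt h ha]

lemma Pmap_update_eq {i : Fin N → ℕ} (hmono : StrictMono i) {α β : Fin N} {j : ℕ}
    (hαj : i α < j) (hβα : (β : ℕ) + 1 = α) :
    Pmap (Function.update i α j, i α) =
      (Function.update (Function.update i α j) β (i α), i β) := by
  have hβ : Function.update i α j β = i β :=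
    Function.update_of_ne (Fin.ne_of_val_ne (by omega)) _ _
  rw [Pmap_eq_update (α := β)] <;> simp only [hβ]
  · exact (hmono (Fin.lt_def.2 (by omega))).le
  · intro a ha
    rcases eq_or_ne a α with rfl | haα
    · simp only [Function.update_self] at ha
      omega
    · rw [Function.update_of_ne haα] at ha
      have := lt_of_le_of_ne (hmono.le_iff_le.1 ha) haα
      exact Fin.le_def.2 (by rw [Fin.lt_def] at this; omega)

lemma lt_update_update {i : Fin N → ℕ} (hmono : StrictMono i) {α β : Fin N} {j : ℕ}
    (hαj : i α < j) (hβα : (β : ℕ) + 1 = α) {a : Fin N} (ha : β ≤ a) :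
    i β < Function.update (Function.update i α j) β (i α) a := by
  have hlt : i β < i α := hmono (Fin.lt_def.2 (by omega))
  rcases eq_or_ne a β with rfl | haβ
  · simpa using hlt
  rw [Function.update_of_ne haβ]
  rcases eq_or_ne a α with rfl | haα
  · simpa using hlt.trans hαj
  · rw [Function.update_of_ne haα]
    exact hmono (lt_of_le_of_ne ha (Ne.symm haβ))

lemma iterate_Pmap_fst_notMem_box {d : ℕ} (hN : 0 < N) {i : Fin N → ℕ} {j : ℕ}
    (hss : IsSS d (i, j)) (hnot : ¬ ∃ a, i a = j) (hss₁ : IsSS d (Pmap (i, j)))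
    {k : Fin (N + 1) → ℕ} (hi : i ∈ box k) {m : ℕ} (hm : 2 ≤ m) :
    (Pmap^[m] (i, j)).1 ∉ box k := by
  obtain ⟨hmono, -, -, hfirst⟩ := hss
  have hne : (Finset.univ.filter fun a => i a ≤ j).Nonempty :=
    ⟨⟨0, hN⟩, by simpa using hfirst ⟨0, hN⟩ rfl⟩
  set α := (Finset.univ.filter fun a => i a ≤ j).max' hne
  have hαj : i α < j :=
    lt_of_le_of_ne (by simpa using Finset.max'_mem _ hne) fun h => hnot ⟨α, h⟩
  have hP₁ : Pmap (i, j) = (Function.update i α j, i α) :=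
    Pmap_eq_update hαj.le fun a ha => Finset.le_max' _ _ (by simpa using ha)
  have hα : (α : ℕ) ≠ 0 := fun h0 => by
    have := hss₁.2.2.2 α h0
    simp only [hP₁, Function.update_self] at this
    omega
  set β : Fin N := ⟨α - 1, by omega⟩
  have hβα : (β : ℕ) + 1 = α := by simp only [β]; omega
  obtain ⟨l, rfl⟩ : ∃ l, m = l + 2 := ⟨m - 2, by omega⟩
  have hβ_eq : (Pmap^[l + 2] (i, j)).1 β = i α := by
    rw [Function.iterate_add_apply, Function.iterate_succ_apply, Function.iterate_one, hP₁,
      Pmap_update_eq hmono hαj hβα,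
      iterate_Pmap_fst_of_lt (fun a ha => lt_update_update hmono hαj hβα ha) l le_rfl]
    simp
  have hsucc : β.succ = α.castSucc :=
    Fin.ext (by simp only [Fin.val_succ, Fin.val_castSucc]; omega)
  rw [mem_box_iff]
  intro hbox
  have := (hbox β).2
  rw [hβ_eq, hsucc] at this
  exact ((mem_box_iff.1 hi) α).1.not_gt this

end Neighbour

end Statement14

theorem statement14_general (F : Type*) [Field F] (N d : ℕ) (hN : 0 < N)
    (i : Fin N → ℕ) (j : ℕ) (hss : IsSS d (i, j)) (hnot : ¬ ∃ a, i a = j)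
    (s : ℕ) (k : Fin (N + 1) → ℕ)
    (m : ℕ) (hm : 1 ≤ m) (hdef : ∀ l < m, IsSS d (Pmap^[l] (i, j)))
    (hcoeff : ∃ c : ((Fin N → ℕ) × ℕ) →₀ F,
      (∀ p ∈ c.support, StrictMono p.1 ∧ (∀ a, p.1 a ≤ d) ∧ p.2 ≤ d) ∧
      (c.sum fun p r => r • Fp F d p.1 p.2) = vv F d N s k ∧
      c (i, j) ≠ 0 ∧ c (Pmap^[m] (i, j)) ≠ 0) :
    m = 1 := by
  obtain ⟨c, hc, hsum, hcij, hcm⟩ := hcoeff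
  by_contra hm₁
  exact Statement14.iterate_Pmap_fst_notMem_box hN hss hnot (hdef 1 (by omega))
    (Statement14.fst_mem_box_of_coeff_ne_zero F hc hsum hcij) (by omega)
    (Statement14.fst_mem_box_of_coeff_ne_zero F hc hsum hcm)

/-- Lemma 2.12 of the paper. Let `(i,j)` be a semistandard pair with
`j ∉ {i₁,…,i_N}`, let `s ∈ {0,…,N-1}` and let `k ∈ I(d+1,N+1)` be strictly increasing. If both
`F(i,j)` and `F(P^m(i,j))` (where `m ≥ 1` and all intermediate iterates are semistandard) have
nonzero coefficients in the expression of `v_{(s,k)}` in the canonical basis of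
`⋀^N Sym^d E ⊗ Sym^d E`, then `m = 1`. -/
theorem statement14 (F : Type*) [Field F] (N d : ℕ) (hN : 0 < N)
    (i : Fin N → ℕ) (j : ℕ) (hss : IsSS d (i, j)) (hnot : ¬ ∃ a, i a = j)
    (s : ℕ) (hs : s < N) (k : Fin (N + 1) → ℕ)
    (hk : StrictMono k) (hk' : ∀ a, k a ≤ d + 1)
    (m : ℕ) (hm : 1 ≤ m) (hdef : ∀ l < m, IsSS d (Pmap^[l] (i, j)))
    (hcoeff : ∃ c : ((Fin N → ℕ) × ℕ) →₀ F,
      (∀ p ∈ c.support, StrictMono p.1 ∧ (∀ a, p.1 a ≤ d) ∧ p.2 ≤ d) ∧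
      (c.sum fun p r => r • Fp F d p.1 p.2) = vv F d N s k ∧
      c (i, j) ≠ 0 ∧ c (Pmap^[m] (i, j)) ≠ 0) :
    m = 1 :=
  statement14_general F N d hN i j hss hnot s k m hm hdef hcoeff

end
end
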